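/- arXiv:1011.1628 — 5 statements merged into one kernel-verified Lean document; each statement's English description precedes it below -/
import Mathlib

section
/- Almost surely, for every n ∈ ℤ, the limit lim_{N→∞} (1/(2N+1)) · Σ_{m=-N}^{N} w_m · w_{m+n} exists and equals η(n), where η(0) = 1, η(1) = η(−1) = −1/2, and η(n) = 0 for |n| ≥ 2. -/
/-!
Split the window into even and odd sites. On either parity, `w m * w (m + n)` equals
`± ε k * ε (k + j)` with `j = ⌊n / 2⌋` or `j = ⌈n / 2⌉`, and the two-sided average over
`[-N, N]` is the mean of the Cesàro averages of these two sequences. For `j = 0` the product is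
identically `1`. For `j ≠ 0` the products `ε k * ε (k + j)` are mean-zero `±1` variables, all with
the same law, and pairwise independent: two of them share at most one factor, and when they do,
they are still uncorrelated, which for `±1`-valued variables already means independent. Etemadi's
strong law of large numbers then gives Cesàro mean `0` along both half-lines, a.s.
-/

open MeasureTheory ProbabilityTheory Filter Finset Topology

theorem tendsto_of_tendsto_even_odd {α : Type*} {u : ℕ → α} {l : Filter α}
    (he : Tendsto (fun n => u (2 * n)) atTop l) (ho : Tendsto (fun n => u (2 * n + 1)) atTop l) :
    Tendsto u atTop l := by
  intro s hs
  obtain ⟨N₀, hN₀⟩ := eventually_atTop.mp (he hs)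
  obtain ⟨N₁, hN₁⟩ := eventually_atTop.mp (ho hs)
  refine eventually_atTop.mpr ⟨2 * (N₀ + N₁), fun m hm => ?_⟩
  obtain ⟨k, rfl | rfl⟩ := Nat.even_or_odd' m
  · exact hN₀ k (by omega)
  · exact hN₁ k (by omega)

theorem tendsto_natCast_add_div_two_mul_add (b c : ℝ) :
    Tendsto (fun T : ℕ => ((T : ℝ) + b) / (2 * T + c)) atTop (𝓝 (1 / 2)) := by
  have h : Tendsto (fun T : ℕ => (1 + b / T) / (2 + c / T)) atTop (𝓝 ((1 + 0) / (2 + 0))) :=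
    ((tendsto_const_div_atTop_nhds_zero_nat b).const_add 1).div
      ((tendsto_const_div_atTop_nhds_zero_nat c).const_add 2) (by norm_num)
  rw [show ((1 : ℝ) + 0) / (2 + 0) = 1 / 2 by norm_num] at h
  refine h.congr' (eventually_atTop.mpr ⟨1, fun T hT => ?_⟩)
  have : (T : ℝ) ≠ 0 := by positivity
  field_simp

theorem sum_range_two_mul (u : ℕ → ℝ) (T : ℕ) :
    ∑ t ∈ range (2 * T), u t = ∑ t ∈ range T, u (2 * t) + ∑ t ∈ range T, u (2 * t + 1) := by
  induction T with
  | zero => simp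
  | succ T ih =>
    rw [mul_add_one, sum_range_succ, sum_range_succ, ih, sum_range_succ, sum_range_succ]
    ring

def TendstoCesaro (u : ℕ → ℝ) (a : ℝ) : Prop :=
  Tendsto (fun T : ℕ => (∑ t ∈ range T, u t) / T) atTop (𝓝 a)

namespace TendstoCesaro

variable {u : ℕ → ℝ} {a b : ℝ}

theorem const (c : ℝ) : TendstoCesaro (fun _ => c) c :=
  tendsto_const_nhds.congr' (eventually_atTop.mpr ⟨1, fun T hT => by
    have : (T : ℝ) ≠ 0 := by positivity
    simp [field]⟩)

theorem neg (hu : TendstoCesaro u a) : TendstoCesaro (fun t => -u t) (-a) := by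
  simpa only [TendstoCesaro, sum_neg_distrib, neg_div] using Tendsto.neg hu

theorem tendsto_sum_div (hu : TendstoCesaro u a) {m : ℕ → ℕ} {d : ℕ → ℝ} {ρ : ℝ}
    (hm : Tendsto m atTop atTop) (hρ : Tendsto (fun N => (m N : ℝ) / d N) atTop (𝓝 ρ)) :
    Tendsto (fun N => (∑ t ∈ range (m N), u t) / d N) atTop (𝓝 (a * ρ)) := by
  refine ((hu.comp hm).mul hρ).congr' ?_
  filter_upwards [hm.eventually_gt_atTop 0] with N hN
  exact div_mul_div_cancel₀ (by positivity)

theorem interleave (he : TendstoCesaro (fun t => u (2 * t)) a)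
    (ho : TendstoCesaro (fun t => u (2 * t + 1)) b) : TendstoCesaro u ((a + b) / 2) := by
  rw [show (a + b) / 2 = a * (1 / 2) + b * (1 / 2) by ring]
  apply tendsto_of_tendsto_even_odd
  · have hρ := tendsto_natCast_add_div_two_mul_add 0 0
    simp only [add_zero] at hρ
    refine ((he.tendsto_sum_div tendsto_id hρ).add (ho.tendsto_sum_div tendsto_id hρ)).congr
      fun T => ?_
    simp [sum_range_two_mul, add_div]
  · have hρ₁ : Tendsto (fun T : ℕ => ((T + 1 : ℕ) : ℝ) / (2 * T + 1)) atTop (𝓝 (1 / 2)) := by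
      simpa using tendsto_natCast_add_div_two_mul_add 1 1
    have hρ₀ := tendsto_natCast_add_div_two_mul_add 0 1
    simp only [add_zero] at hρ₀
    refine ((he.tendsto_sum_div (tendsto_add_atTop_nat 1) hρ₁).add
      (ho.tendsto_sum_div tendsto_id hρ₀)).congr fun T => ?_
    simp only [id]
    rw [sum_range_succ _ (2 * T), sum_range_two_mul, sum_range_succ _ T]
    push_cast
    ring

end TendstoCesaro

/-- Cesàro convergence along the two half-lines `ℕ` and `-1 - ℕ` that partition `ℤ`. -/
def TendstoTwoSidedCesaro (f : ℤ → ℝ) (a : ℝ) : Prop :=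
  TendstoCesaro (fun t => f t) a ∧ TendstoCesaro (fun t => f (-1 - t)) a

theorem sum_Icc_neg_self_eq (f : ℤ → ℝ) (N : ℕ) :
    ∑ m ∈ Icc (-(N : ℤ)) N, f m = ∑ t ∈ range (N + 1), f t + ∑ t ∈ range N, f (-1 - t) := by
  induction N with
  | zero => simp
  | succ N ih =>
    have hIcc : Icc (-((N + 1 : ℕ) : ℤ)) (N + 1 : ℕ)
        = insert (-(N + 1 : ℤ)) (insert (N + 1 : ℤ) (Icc (-(N : ℤ)) N)) := by
      ext m; simp only [mem_Icc, mem_insert]; omega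
    rw [hIcc, sum_insert (by simp; omega), sum_insert (by simp), ih,
      sum_range_succ (fun t : ℕ => f t) (N + 1), sum_range_succ (fun t : ℕ => f (-1 - t)) N,
      show -((N : ℤ) + 1) = -1 - N by ring]
    push_cast
    ring

namespace TendstoTwoSidedCesaro

variable {f : ℤ → ℝ} {a b : ℝ}

theorem const (c : ℝ) : TendstoTwoSidedCesaro (fun _ => c) c :=
  ⟨TendstoCesaro.const c, TendstoCesaro.const c⟩

theorem neg (hf : TendstoTwoSidedCesaro f a) : TendstoTwoSidedCesaro (fun m => -f m) (-a) :=
  ⟨hf.1.neg, hf.2.neg⟩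

theorem interleave (he : TendstoTwoSidedCesaro (fun k => f (2 * k)) a)
    (ho : TendstoTwoSidedCesaro (fun k => f (2 * k + 1)) b) :
    TendstoTwoSidedCesaro f ((a + b) / 2) := by
  refine ⟨TendstoCesaro.interleave (by simpa using he.1) (by simpa using ho.1), ?_⟩
  rw [add_comm]
  refine TendstoCesaro.interleave ?_ ?_
  · convert ho.2 using 4 with t
    push_cast
    ring
  · convert he.2 using 4 with t
    push_cast
    ring

theorem tendsto_avg_Icc (hf : TendstoTwoSidedCesaro f a) :
    Tendsto (fun N : ℕ => 1 / (2 * (N : ℝ) + 1) * ∑ m ∈ Icc (-(N : ℤ)) N, f m) atTop (𝓝 a) := by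
  have hρ₁ : Tendsto (fun N : ℕ => ((N + 1 : ℕ) : ℝ) / (2 * N + 1)) atTop (𝓝 (1 / 2)) := by
    simpa using tendsto_natCast_add_div_two_mul_add 1 1
  have hρ₀ := tendsto_natCast_add_div_two_mul_add 0 1
  simp only [add_zero] at hρ₀
  rw [show a = a * (1 / 2) + a * (1 / 2) by ring]
  refine ((hf.1.tendsto_sum_div (tendsto_add_atTop_nat 1) hρ₁).add
    (hf.2.tendsto_sum_div tendsto_id hρ₀)).congr fun N => ?_
  simp only [id, sum_Icc_neg_self_eq]
  ring

end TendstoTwoSidedCesaro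

section SignValued

variable {Ω : Type*} [MeasurableSpace Ω] {P : Measure Ω} {U V : Ω → ℝ}

theorem ae_sign_mul (hU : ∀ᵐ ω ∂P, U ω = 1 ∨ U ω = -1) (hV : ∀ᵐ ω ∂P, V ω = 1 ∨ V ω = -1) :
    ∀ᵐ ω ∂P, U ω * V ω = 1 ∨ U ω * V ω = -1 := by
  filter_upwards [hU, hV] with ω hUω hVω
  rcases hUω with h | h <;> rcases hVω with h' | h' <;> simp [h, h']

/-- On `{1, -1}` every function is affine. -/
theorem comp_ae_eq_affine_of_ae_sign (hU : ∀ᵐ ω ∂P, U ω = 1 ∨ U ω = -1) (φ : ℝ → ℝ) :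
    φ ∘ U =ᵐ[P] fun ω => (φ 1 + φ (-1)) / 2 + (φ 1 - φ (-1)) / 2 * U ω := by
  filter_upwards [hU] with ω h
  rcases h with h | h <;> simp only [Function.comp_apply, h] <;> ring

variable [IsProbabilityMeasure P]

theorem integrable_of_ae_sign (hUm : AEStronglyMeasurable U P)
    (hU : ∀ᵐ ω ∂P, U ω = 1 ∨ U ω = -1) : Integrable U P :=
  .of_bound hUm 1 (by filter_upwards [hU] with ω h; rcases h with h | h <;> simp [h])

theorem integral_comp_of_ae_sign (hUm : AEStronglyMeasurable U P)
    (hU : ∀ᵐ ω ∂P, U ω = 1 ∨ U ω = -1) (φ : ℝ → ℝ) :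
    P[φ ∘ U] = (φ 1 + φ (-1)) / 2 + (φ 1 - φ (-1)) / 2 * P[U] := by
  rw [integral_congr_ae (comp_ae_eq_affine_of_ae_sign hU φ),
    integral_add (integrable_const _) ((integrable_of_ae_sign hUm hU).const_mul _),
    integral_const_mul]
  simp

theorem integral_comp_mul_comp_of_ae_sign (hUm : AEStronglyMeasurable U P)
    (hVm : AEStronglyMeasurable V P) (hU : ∀ᵐ ω ∂P, U ω = 1 ∨ U ω = -1)
    (hV : ∀ᵐ ω ∂P, V ω = 1 ∨ V ω = -1) (φ ψ : ℝ → ℝ) :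
    P[φ ∘ U * ψ ∘ V] = P[φ ∘ U] * P[ψ ∘ V]
      + (φ 1 - φ (-1)) / 2 * ((ψ 1 - ψ (-1)) / 2) * (P[U * V] - P[U] * P[V]) := by
  have hUi := integrable_of_ae_sign hUm hU
  have hVi := integrable_of_ae_sign hVm hV
  have hUVi := integrable_of_ae_sign (hUm.mul hVm) (ae_sign_mul hU hV)
  rw [integral_comp_of_ae_sign hUm hU, integral_comp_of_ae_sign hVm hV,
    integral_congr_ae ((comp_ae_eq_affine_of_ae_sign hU φ).mul
      (comp_ae_eq_affine_of_ae_sign hV ψ))]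
  set α := (φ 1 + φ (-1)) / 2
  set β := (φ 1 - φ (-1)) / 2
  set γ := (ψ 1 + ψ (-1)) / 2
  set δ := (ψ 1 - ψ (-1)) / 2
  have hexpand : ((fun ω => α + β * U ω) * fun ω => γ + δ * V ω)
      = fun ω => α * γ + (α * δ * V ω + (β * γ * U ω + β * δ * (U * V) ω)) := by
    ext ω; simp only [Pi.mul_apply]; ring
  rw [hexpand, integral_add, integral_add, integral_add]
  · simp only [integral_const_mul, integral_const, probReal_univ, one_smul]
    ring
  all_goals fun_prop

theorem indepFun_of_ae_sign (hUm : Measurable U) (hVm : Measurable V)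
    (hU : ∀ᵐ ω ∂P, U ω = 1 ∨ U ω = -1) (hV : ∀ᵐ ω ∂P, V ω = 1 ∨ V ω = -1)
    (hUV : P[U * V] = P[U] * P[V]) : IndepFun U V P := by
  refine (indepFun_iff_integral_comp_mul (hfm := hUm) (hgm := hVm)).mpr fun {φ ψ} _ _ _ _ => ?_
  rw [integral_comp_mul_comp_of_ae_sign hUm.aestronglyMeasurable hVm.aestronglyMeasurable hU hV,
    hUV, sub_self, mul_zero, add_zero]

theorem measureReal_preimage_of_ae_sign (hUm : Measurable U)
    (hU : ∀ᵐ ω ∂P, U ω = 1 ∨ U ω = -1) {s : Set ℝ} (hs : MeasurableSet s) :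
    P.real (U ⁻¹' s) = (s.indicator 1 1 + s.indicator 1 (-1)) / 2
      + (s.indicator 1 1 - s.indicator 1 (-1)) / 2 * P[U] := by
  rw [← integral_comp_of_ae_sign hUm.aestronglyMeasurable hU, ← integral_indicator_one (hUm hs)]
  rfl

theorem identDistrib_of_ae_sign (hUm : Measurable U) (hVm : Measurable V)
    (hU : ∀ᵐ ω ∂P, U ω = 1 ∨ U ω = -1) (hV : ∀ᵐ ω ∂P, V ω = 1 ∨ V ω = -1)
    (hUV : P[U] = P[V]) : IdentDistrib U V P P := by
  refine ⟨hUm.aemeasurable, hVm.aemeasurable, Measure.ext fun s hs => ?_⟩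
  rw [Measure.map_apply hUm hs, Measure.map_apply hVm hs, ← ofReal_measureReal,
    ← ofReal_measureReal, measureReal_preimage_of_ae_sign hUm hU hs,
    measureReal_preimage_of_ae_sign hVm hV hs, hUV]

end SignValued

section FairSigns

variable {Ω : Type*} [MeasurableSpace Ω] {P : Measure Ω} [IsProbabilityMeasure P]

theorem ae_sign_of_fair {Y : Ω → ℝ} (hY : Measurable Y)
    (h : P {ω | Y ω = 1} = 1 / 2 ∧ P {ω | Y ω = -1} = 1 / 2) :
    ∀ᵐ ω ∂P, Y ω = 1 ∨ Y ω = -1 := by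
  have h₁ : MeasurableSet {ω | Y ω = 1} := hY (measurableSet_singleton 1)
  have h₂ : MeasurableSet {ω | Y ω = -1} := hY (measurableSet_singleton (-1))
  have hdisj : Disjoint {ω | Y ω = 1} {ω | Y ω = -1} :=
    Set.disjoint_left.mpr fun ω (h1 : Y ω = 1) (h2 : Y ω = -1) => by linarith
  refine (ae_iff_measure_eq (p := fun ω => Y ω = 1 ∨ Y ω = -1)
    (h₁.union h₂).nullMeasurableSet).mpr ?_
  rw [Set.ofPred_or, measure_union hdisj h₂, h.1, h.2, ENNReal.add_halves, measure_univ]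

theorem integral_eq_zero_of_fair {Y : Ω → ℝ} (hY : Measurable Y)
    (h : P {ω | Y ω = 1} = 1 / 2 ∧ P {ω | Y ω = -1} = 1 / 2) : P[Y] = 0 := by
  have h₁ := measureReal_preimage_of_ae_sign hY (ae_sign_of_fair hY h) (measurableSet_singleton 1)
  rw [measureReal_def] at h₁
  simp only [Set.preimage, Set.mem_singleton_iff, h.1] at h₁
  norm_num at h₁
  linarith

end FairSigns

section FairSignFamily

variable {Ω : Type*} [MeasurableSpace Ω] {P : Measure Ω} [IsProbabilityMeasure P]
  {ε : ℤ → Ω → ℝ}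

theorem integral_mul_eq_zero_of_ne (hmeas : ∀ k, Measurable (ε k)) (hindep : iIndepFun ε P)
    (hdist : ∀ k, P {ω | ε k ω = 1} = 1 / 2 ∧ P {ω | ε k ω = -1} = 1 / 2)
    {a b : ℤ} (hab : a ≠ b) : P[ε a * ε b] = 0 := by
  rw [(hindep.indepFun hab).integral_mul_eq_mul_integral (hmeas a).aestronglyMeasurable
    (hmeas b).aestronglyMeasurable, integral_eq_zero_of_fair (hmeas a) (hdist a), zero_mul]

theorem indepFun_mul_mul_of_ne (hmeas : ∀ k, Measurable (ε k)) (hindep : iIndepFun ε P)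
    (hdist : ∀ k, P {ω | ε k ω = 1} = 1 / 2 ∧ P {ω | ε k ω = -1} = 1 / 2)
    {a b c : ℤ} (hab : a ≠ b) (hbc : b ≠ c) :
    IndepFun (ε a * ε b) (ε a * ε c) P := by
  have hsign k := ae_sign_of_fair (hmeas k) (hdist k)
  refine indepFun_of_ae_sign ((hmeas a).mul (hmeas b)) ((hmeas a).mul (hmeas c))
    (ae_sign_mul (hsign a) (hsign b)) (ae_sign_mul (hsign a) (hsign c)) ?_
  rw [integral_mul_eq_zero_of_ne hmeas hindep hdist hab, zero_mul,
    ← integral_mul_eq_zero_of_ne hmeas hindep hdist hbc]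
  refine integral_congr_ae ?_
  filter_upwards [hsign a] with ω h
  rcases h with h | h <;> simp [h]

theorem ae_tendstoCesaro_mul_shift (hmeas : ∀ k, Measurable (ε k)) (hindep : iIndepFun ε P)
    (hdist : ∀ k, P {ω | ε k ω = 1} = 1 / 2 ∧ P {ω | ε k ω = -1} = 1 / 2)
    {e : ℕ → ℤ} (he : Function.Injective e) {j : ℤ} (hj : j ≠ 0) :
    ∀ᵐ ω ∂P, TendstoCesaro (fun t => ε (e t) ω * ε (e t + j) ω) 0 := by
  have hsign k := ae_sign_of_fair (hmeas k) (hdist k)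
  set X : ℕ → Ω → ℝ := fun t => ε (e t) * ε (e t + j) with hX
  have hXm t : Measurable (X t) := (hmeas _).mul (hmeas _)
  have hXs t : ∀ᵐ ω ∂P, X t ω = 1 ∨ X t ω = -1 := ae_sign_mul (hsign _) (hsign _)
  have hX₀ t : P[X t] = 0 := integral_mul_eq_zero_of_ne hmeas hindep hdist (by omega)
  have hpair : Pairwise fun s t => IndepFun (X s) (X t) P := by
    intro s t hst
    have hst' := he.ne hst
    by_cases h₁ : e s = e t + j
    · rw [show X t = ε (e s) * ε (e t) by rw [hX, h₁, mul_comm]]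
      exact indepFun_mul_mul_of_ne hmeas hindep hdist (by omega) (by omega)
    by_cases h₂ : e t = e s + j
    · rw [show X s = ε (e t) * ε (e s) by rw [hX, h₂, mul_comm]]
      exact indepFun_mul_mul_of_ne hmeas hindep hdist hst'.symm (by omega)
    exact hindep.indepFun_mul_mul hmeas _ _ _ _ hst' h₁ (by omega) (by omega)
  have hslln := strong_law_ae_real X (integrable_of_ae_sign (hXm 0).aestronglyMeasurable (hXs 0))
    hpair fun t => identDistrib_of_ae_sign (hXm t) (hXm 0) (hXs t) (hXs 0) (by rw [hX₀, hX₀])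
  rwa [hX₀] at hslln

theorem ae_tendstoTwoSidedCesaro_mul_shift (hmeas : ∀ k, Measurable (ε k))
    (hindep : iIndepFun ε P)
    (hdist : ∀ k, P {ω | ε k ω = 1} = 1 / 2 ∧ P {ω | ε k ω = -1} = 1 / 2) :
    ∀ᵐ ω ∂P, ∀ j : ℤ,
      TendstoTwoSidedCesaro (fun k => ε k ω * ε (k + j) ω) (if j = 0 then 1 else 0) := by
  rw [ae_all_iff]
  intro j
  split_ifs with hj
  · filter_upwards [ae_all_iff.mpr fun k => ae_sign_of_fair (hmeas k) (hdist k)] with ω hω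
    have hsq : (fun k => ε k ω * ε (k + j) ω) = fun _ => 1 := by
      funext k
      rcases hω k with h | h <;> simp [hj, h]
    rw [hsq]
    exact .const 1
  · filter_upwards [ae_tendstoCesaro_mul_shift hmeas hindep hdist Nat.cast_injective hj,
      ae_tendstoCesaro_mul_shift hmeas hindep hdist (e := fun t => -1 - t)
        (fun s t h => by simpa using h) hj] with ω h₁ h₂
    exact ⟨h₁, h₂⟩

end FairSignFamily

section Dimers

variable {x w : ℤ → ℝ} {j : ℤ} {a b : ℝ}

theorem tendstoTwoSidedCesaro_dimer_even_shift (hw_even : ∀ k, w (2 * k) = x k)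
    (hw_odd : ∀ k, w (2 * k + 1) = -x k) (h : TendstoTwoSidedCesaro (fun k => x k * x (k + j)) a) :
    TendstoTwoSidedCesaro (fun m => w m * w (m + 2 * j)) a := by
  have he : TendstoTwoSidedCesaro (fun k => w (2 * k) * w (2 * k + 2 * j)) a := by
    simpa only [← mul_add, hw_even] using h
  have ho : TendstoTwoSidedCesaro (fun k => w (2 * k + 1) * w (2 * k + 1 + 2 * j)) a := by
    simpa only [show ∀ k, 2 * k + 1 + 2 * j = 2 * (k + j) + 1 by intro k; ring, hw_odd,
      neg_mul_neg] using h
  simpa only [add_self_div_two] using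
    TendstoTwoSidedCesaro.interleave (f := fun m => w m * w (m + 2 * j)) he ho

theorem tendstoTwoSidedCesaro_dimer_odd_shift (hw_even : ∀ k, w (2 * k) = x k)
    (hw_odd : ∀ k, w (2 * k + 1) = -x k)
    (h₀ : TendstoTwoSidedCesaro (fun k => x k * x (k + j)) a)
    (h₁ : TendstoTwoSidedCesaro (fun k => x k * x (k + (j + 1))) b) :
    TendstoTwoSidedCesaro (fun m => w m * w (m + (2 * j + 1))) (-(a + b) / 2) := by
  have he : TendstoTwoSidedCesaro (fun k => w (2 * k) * w (2 * k + (2 * j + 1))) (-a) := by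
    simpa only [show ∀ k, 2 * k + (2 * j + 1) = 2 * (k + j) + 1 by intro k; ring, hw_even,
      hw_odd, mul_neg] using h₀.neg
  have ho : TendstoTwoSidedCesaro (fun k => w (2 * k + 1) * w (2 * k + 1 + (2 * j + 1))) (-b) := by
    simpa only [show ∀ k, 2 * k + 1 + (2 * j + 1) = 2 * (k + (j + 1)) by intro k; ring, hw_even,
      hw_odd, neg_mul] using h₁.neg
  rw [neg_add]
  exact .interleave (f := fun m => w m * w (m + (2 * j + 1))) he ho

end Dimers

/-- For the even-placement realisation of the dimeric molecule shift
(`w (2k) = ε k`, `w (2k+1) = -ε k` with `(ε k)` i.i.d. fair ±1 random variables),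
almost surely, for every `n : ℤ`, the averaged correlation sums
`(1/(2N+1)) · Σ_{m=-N}^{N} w m · w (m+n)` converge to `η n`, where
`η 0 = 1`, `η 1 = η (-1) = -1/2` and `η n = 0` for `|n| ≥ 2`. -/
theorem dms_autocorrelation
    {Ω : Type*} [MeasurableSpace Ω] (P : Measure Ω) [IsProbabilityMeasure P]
    (ε : ℤ → Ω → ℝ) (hmeas : ∀ k, Measurable (ε k))
    (hindep : iIndepFun ε P)
    (hdist : ∀ k, P {ω | ε k ω = 1} = 1/2 ∧ P {ω | ε k ω = -1} = 1/2)
    (w : ℤ → Ω → ℝ)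
    (hw_even : ∀ k ω, w (2*k) ω = ε k ω)
    (hw_odd : ∀ k ω, w (2*k+1) ω = - ε k ω)
    (η : ℤ → ℝ)
    (hη0 : η 0 = 1) (hη1 : η 1 = -1/2) (hηm1 : η (-1) = -1/2)
    (hηn : ∀ n : ℤ, 2 ≤ |n| → η n = 0) :
    ∀ᵐ ω ∂P, ∀ n : ℤ,
      Tendsto (fun N : ℕ =>
          (1 / (2*(N:ℝ)+1)) *
            ∑ m ∈ Finset.Icc (-(N:ℤ)) (N:ℤ), w m ω * w (m+n) ω)
        atTop (nhds (η n)) := by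
  filter_upwards [ae_tendstoTwoSidedCesaro_mul_shift hmeas hindep hdist] with ω hω n
  refine TendstoTwoSidedCesaro.tendsto_avg_Icc ?_
  have hη : ∀ n, 2 ≤ n ∨ n ≤ -2 → η n = 0 := fun n hn => hηn n (le_abs'.mpr hn.symm)
  obtain ⟨j, rfl | rfl⟩ := Int.even_or_odd' n
  · have hlim : η (2 * j) = if j = 0 then 1 else 0 := by
      split_ifs with hj
      · rw [hj, mul_zero, hη0]
      · exact hη _ (by omega)
    rw [hlim]
    exact tendstoTwoSidedCesaro_dimer_even_shift (hw_even · ω) (hw_odd · ω) (hω j)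
  · have hlim : η (2 * j + 1)
        = -((if j = 0 then 1 else 0) + (if j + 1 = 0 then 1 else 0)) / 2 := by
      split_ifs with h₀ h₁ h₁
      · omega
      · simp [h₀, hη1]
      · simp [show j = -1 by omega, hηm1]
      · rw [hη _ (by omega)]; ring
    rw [hlim]
    exact tendstoTwoSidedCesaro_dimer_odd_shift (hw_even · ω) (hw_odd · ω) (hω j) (hω (j + 1))
end

section
/- Let h₊, h₋ ∈ ℂ and let h : ℝ → ℂ satisfy h(1) = h₊ and h(−1) = h₋. Almost surely, for every n ∈ ℤ, the limit lim_{N→∞} (1/(2N+1)) · Σ_{m=-N}^{N} conj(h(v_m)) · h(v_{m+n}) exists and equals (|h₊ + h₋|² + |h₊|² − |h₋|²)/4 + (|h₊ − h₋|²/4) · η_Y(n), where η_Y(0) = 1, η_Y(n) = 1/2 for even n ≠ 0, and η_Y(n) = 0 for odd n. -/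
/-!
Write `h s = a + b * s` for `s = ±1`, with `a = (h 1 + h (-1)) / 2` and `b = (h 1 - h (-1)) / 2`.
The correlation average then becomes an affine combination of the averages of `v`, of its shift
by `n` and of `v m * v (m + n)`. Grouping `m` into dimers `{2k, 2k+1}`, on which `v (2k) = 1` and
`v (2k+1) = ε k * ε (k+1)`, these reduce to averages over `k` of products `∏ j ∈ t, ε (k + j)`
for nonempty finite `t`, since products of signs combine along symmetric differences.

For fixed `t` the translates `Z i = ∏ j ∈ i + t, ε j` are `±1`-valued with mean zero, and any two
of them are uncorrelated (their product is again such a product, over a nonempty symmetric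
difference). For `±1`-valued variables this already gives pairwise independence and identical
distribution, so Etemadi's strong law, applied to `Z i` for `i ≥ 0` and for `i ≤ 0`, shows that
their averages tend to `0` almost surely.
-/

open MeasureTheory ProbabilityTheory Filter Finset Topology
open scoped symmDiff ComplexConjugate

lemma Finset.prod_eq_one_or_neg_one {ι M : Type*} [CommMonoid M] [HasDistribNeg M]
    {s : Finset ι} {f : ι → M} (hf : ∀ i ∈ s, f i = 1 ∨ f i = -1) :
    ∏ i ∈ s, f i = 1 ∨ ∏ i ∈ s, f i = -1 :=
  prod_induction f (fun x => x = 1 ∨ x = -1)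
    (fun a b ha hb => by rcases ha with rfl | rfl <;> rcases hb with rfl | rfl <;> simp)
    (Or.inl rfl) hf

lemma Finset.prod_mul_prod_eq_prod_symmDiff {ι M : Type*} [CommMonoid M] [DecidableEq ι]
    {s t : Finset ι} {f : ι → M} (hf : ∀ i ∈ s ∩ t, f i * f i = 1) :
    (∏ i ∈ s, f i) * ∏ i ∈ t, f i = ∏ i ∈ s ∆ t, f i := by
  rw [← prod_union_inter, ← sup_eq_union, ← symmDiff_sup_inf, sup_eq_union, inf_eq_inter,
    prod_union (s₁ := s ∆ t) (s₂ := s ∩ t) (disjoint_symmDiff_inf s t), mul_assoc,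
    ← prod_mul_distrib, prod_eq_one hf, mul_one]

lemma Finset.map_addLeftEmbedding_injective {t : Finset ℤ} (ht : t.Nonempty) :
    Function.Injective fun i : ℤ => t.map (addLeftEmbedding i) := by
  intro i i' h
  have hsum := congrArg (fun s : Finset ℤ => ∑ j ∈ s, j) h
  simp only [sum_map, addLeftEmbedding_apply] at hsum
  rw [sum_add_distrib, sum_add_distrib, add_left_inj, sum_const, sum_const, nsmul_eq_mul,
    nsmul_eq_mul] at hsum
  exact mul_left_cancel₀ (Nat.cast_ne_zero.2 ht.card_pos.ne') hsum

noncomputable def symmAvg {𝕜 : Type*} [DivisionRing 𝕜] (u : ℤ → 𝕜) (N : ℕ) : 𝕜 :=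
  (∑ m ∈ Icc (-(N : ℤ)) N, u m) / (2 * N + 1)

section Linearity

variable {𝕜 : Type*} [DivisionRing 𝕜] (N : ℕ)

lemma symmAvg_add (u v : ℤ → 𝕜) :
    symmAvg (fun m => u m + v m) N = symmAvg u N + symmAvg v N := by
  simp only [symmAvg, sum_add_distrib, add_div]

lemma symmAvg_const_mul (c : 𝕜) (u : ℤ → 𝕜) :
    symmAvg (fun m => c * u m) N = c * symmAvg u N := by
  simp only [symmAvg, ← mul_sum, mul_div_assoc]

lemma symmAvg_const [CharZero 𝕜] (c : 𝕜) : symmAvg (fun _ => c) N = c := by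
  have hcard : ((N : ℤ) + 1 - -(N : ℤ)).toNat = 2 * N + 1 := by omega
  have hpos : (2 * N + 1 : 𝕜) ≠ 0 := by exact_mod_cast (2 * N).succ_ne_zero
  rw [symmAvg, sum_const, Int.card_Icc, hcard, nsmul_eq_mul, Nat.cast_comm]
  push_cast
  exact mul_div_cancel_right₀ c hpos

lemma symmAvg_ofReal (u : ℤ → ℝ) : symmAvg (fun m => (u m : ℂ)) N = symmAvg u N := by
  simp [symmAvg]

end Linearity

lemma tendsto_div_two_mul_add_one_of_abs_le {r : ℕ → ℝ} {C : ℝ} (hr : ∀ N, |r N| ≤ C) :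
    Tendsto (fun N : ℕ => r N / (2 * N + 1)) atTop (𝓝 0) := by
  have hden : Tendsto (fun N : ℕ => 2 * (N : ℝ) + 1) atTop atTop :=
    tendsto_atTop_add_const_right _ _
      (tendsto_natCast_atTop_atTop.const_mul_atTop two_pos)
  refine squeeze_zero_norm (fun N => ?_) ((tendsto_const_nhds (x := C)).div_atTop hden)
  rw [Real.norm_eq_abs, abs_div, abs_of_pos (by positivity : (0 : ℝ) < 2 * N + 1)]
  gcongr
  exact hr N

lemma tendsto_succ_div_two_mul_add_one :
    Tendsto (fun N : ℕ => ((N : ℝ) + 1) / (2 * N + 1)) atTop (𝓝 (1 / 2)) := by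
  have h := (tendsto_div_two_mul_add_one_of_abs_le (r := fun _ => 1 / 2) (C := 1 / 2)
    (fun _ => by norm_num)).const_add (1 / 2)
  rw [add_zero] at h
  refine h.congr fun N => ?_
  field_simp
  ring

lemma sum_Icc_comp_add_one {M : Type*} [AddCommMonoid M] (u : ℤ → M) (N : ℕ) :
    ∑ k ∈ Icc (-(N : ℤ)) N, u (k + 1) + u (-N) = ∑ k ∈ Icc (-(N : ℤ)) N, u k + u (N + 1) := by
  have hshift : ∑ k ∈ Icc (-(N : ℤ)) N, u (k + 1) = ∑ k ∈ Icc (-(N : ℤ) + 1) (N + 1), u k := by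
    rw [← map_add_right_Icc, sum_map]
    rfl
  have hIcc : insert (-(N : ℤ)) (Icc (-(N : ℤ) + 1) (N + 1))
      = insert ((N : ℤ) + 1) (Icc (-(N : ℤ)) N) := by
    ext m; simp only [mem_insert, mem_Icc]; omega
  rw [hshift, add_comm, ← sum_insert (by simp), hIcc, sum_insert (by simp), add_comm]

lemma tendsto_symmAvg_comp_add_one_sub {u : ℤ → ℝ} {C : ℝ} (hu : ∀ m, |u m| ≤ C) :
    Tendsto (fun N => symmAvg (fun k => u (k + 1)) N - symmAvg u N) atTop (𝓝 0) := by
  have hr : ∀ N : ℕ, |u (N + 1) - u (-N)| ≤ C + C :=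
    fun N => (abs_sub _ _).trans (add_le_add (hu _) (hu _))
  refine (tendsto_div_two_mul_add_one_of_abs_le hr).congr fun N => ?_
  rw [symmAvg, symmAvg, ← sub_div]
  congr 1
  linear_combination -sum_Icc_comp_add_one u N

lemma Filter.Tendsto.symmAvg_comp_add {u : ℤ → ℝ} {C L : ℝ} (hu : ∀ m, |u m| ≤ C)
    (h : Tendsto (symmAvg u) atTop (𝓝 L)) (c : ℤ) :
    Tendsto (symmAvg fun k => u (k + c)) atTop (𝓝 L) := by
  induction c using Int.induction_on with
  | zero => simpa using h
  | succ c ih =>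
    have h1 := ih.add (tendsto_symmAvg_comp_add_one_sub (u := fun k => u (k + c)) fun _ => hu _)
    rw [add_zero] at h1
    refine h1.congr fun N => ?_
    simp only [add_sub_cancel, add_assoc, add_comm (1 : ℤ)]
  | pred c ih =>
    have h1 := ih.sub
      (tendsto_symmAvg_comp_add_one_sub (u := fun k => u (k + (-c - 1))) fun _ => hu _)
    rw [sub_zero] at h1
    refine h1.congr fun N => ?_
    simp only [add_assoc, show (1 : ℤ) + (-c - 1) = -c by ring, sub_sub_cancel]

lemma sum_Icc_two_mul_eq_sum_pairs {M : Type*} [AddCommMonoid M] (u : ℤ → M) (K : ℕ) :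
    ∑ m ∈ Icc (-(2 * K : ℤ)) (2 * K + 1), u m
      = ∑ k ∈ Icc (-(K : ℤ)) K, (u (2 * k) + u (2 * k + 1)) := by
  rw [← sum_fiberwise_of_maps_to (g := fun m : ℤ => m / 2) (t := Icc (-(K : ℤ)) K)
    (fun m hm => by simp only [mem_Icc] at hm ⊢; omega)]
  refine sum_congr rfl fun k hk => ?_
  have hfiber : {m ∈ Icc (-(2 * K : ℤ)) (2 * K + 1) | m / 2 = k} = {2 * k, 2 * k + 1} := by
    ext m; simp only [mem_Icc] at hk; simp only [mem_filter, mem_Icc, mem_insert, mem_singleton]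
    omega
  rw [hfiber, sum_pair (by omega)]

lemma abs_sum_Icc_sub_sum_Icc_two_mul_half_le {u : ℤ → ℝ} {C : ℝ} (hu : ∀ m, |u m| ≤ C) (N : ℕ) :
    |∑ m ∈ Icc (-(N : ℤ)) N, u m
      - ∑ m ∈ Icc (-(2 * (N / 2 : ℕ) : ℤ)) (2 * (N / 2 : ℕ) + 1), u m| ≤ C := by
  obtain ⟨K, rfl | rfl⟩ := Nat.even_or_odd' N
  · have hIcc : Icc (-(2 * K : ℤ)) (2 * K + 1)
        = insert (2 * K + 1 : ℤ) (Icc (-((2 * K : ℕ) : ℤ)) (2 * K : ℕ)) := by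
      ext m; simp only [mem_insert, mem_Icc]; omega
    rw [Nat.mul_div_cancel_left K two_pos, hIcc, sum_insert (by simp), sub_add_cancel_right,
      abs_neg]
    exact hu _
  · have hIcc : Icc (-((2 * K + 1 : ℕ) : ℤ)) (2 * K + 1 : ℕ)
        = insert (-((2 * K + 1 : ℕ) : ℤ)) (Icc (-(2 * K : ℤ)) (2 * K + 1)) := by
      ext m; simp only [mem_insert, mem_Icc]; omega
    rw [show (2 * K + 1) / 2 = K by omega, hIcc, sum_insert (by simp), add_sub_cancel_right]
    exact hu _

lemma tendsto_two_mul_half_add_one_div :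
    Tendsto (fun N : ℕ => (2 * ((N / 2 : ℕ) : ℝ) + 1) / (2 * N + 1)) atTop (𝓝 (1 / 2)) := by
  have hmod : ∀ N : ℕ, |((N % 2 : ℕ) : ℝ)| ≤ 1 := fun N => by
    rw [abs_of_nonneg (by positivity)]
    exact_mod_cast Nat.lt_succ_iff.1 (Nat.mod_lt N two_pos)
  have h := tendsto_succ_div_two_mul_add_one.sub (tendsto_div_two_mul_add_one_of_abs_le hmod)
  rw [sub_zero] at h
  refine h.congr fun N => ?_
  rw [← sub_div]
  congr 1
  have hN : (N : ℝ) = 2 * ((N / 2 : ℕ) : ℝ) + ((N % 2 : ℕ) : ℝ) := by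
    exact_mod_cast (Nat.div_add_mod N 2).symm
  linear_combination hN

lemma Filter.Tendsto.symmAvg_of_pairs {u : ℤ → ℝ} {C L : ℝ} (hu : ∀ m, |u m| ≤ C)
    (h : Tendsto (symmAvg fun k => u (2 * k) + u (2 * k + 1)) atTop (𝓝 L)) :
    Tendsto (symmAvg u) atTop (𝓝 (L / 2)) := by
  have h1 := (tendsto_two_mul_half_add_one_div.mul
    (h.comp (Nat.tendsto_div_const_atTop two_ne_zero))).add
    (tendsto_div_two_mul_add_one_of_abs_le (abs_sum_Icc_sub_sum_Icc_two_mul_half_le hu))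
  rw [add_zero, one_div_mul_eq_div] at h1
  refine h1.congr fun N => ?_
  have hK : (2 * ((N / 2 : ℕ) : ℝ) + 1) ≠ 0 := by positivity
  simp only [Function.comp_apply, symmAvg, ← sum_Icc_two_mul_eq_sum_pairs]
  push_cast
  field_simp
  ring

lemma sum_Icc_add_apply_zero_eq_sum_range {M : Type*} [AddCommMonoid M] (u : ℤ → M) (N : ℕ) :
    ∑ m ∈ Icc (-(N : ℤ)) N, u m + u 0 = ∑ i ∈ range (N + 1), u i + ∑ i ∈ range (N + 1), u (-i) := by
  induction N with
  | zero => simp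
  | succ N ih =>
    have hIcc : Icc (-((N + 1 : ℕ) : ℤ)) (N + 1 : ℕ)
        = insert ((N : ℤ) + 1) (insert (-((N : ℤ) + 1)) (Icc (-(N : ℤ)) N)) := by
      ext m; simp only [mem_insert, mem_Icc]; omega
    rw [hIcc, sum_insert (by simp; omega), sum_insert (by simp), sum_range_succ _ (N + 1),
      sum_range_succ (fun i : ℕ => u (-i)) (N + 1)]
    calc _ = (∑ m ∈ Icc (-(N : ℤ)) N, u m + u 0) + (u (N + 1) + u (-(N + 1))) := by abel
      _ = _ := by rw [ih]; push_cast; abel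

lemma tendsto_symmAvg_of_tendsto_cesaro {u : ℤ → ℝ} {L : ℝ}
    (hpos : Tendsto (fun n : ℕ => (∑ i ∈ range n, u i) / n) atTop (𝓝 L))
    (hneg : Tendsto (fun n : ℕ => (∑ i ∈ range n, u (-i)) / n) atTop (𝓝 L)) :
    Tendsto (symmAvg u) atTop (𝓝 L) := by
  have h := (tendsto_succ_div_two_mul_add_one.mul
    ((hpos.add hneg).comp (tendsto_add_atTop_nat 1))).sub
    (tendsto_div_two_mul_add_one_of_abs_le (r := fun _ => u 0) (C := |u 0|) fun _ => le_rfl)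
  rw [sub_zero, ← two_mul, ← mul_assoc, one_div_mul_cancel two_ne_zero, one_mul] at h
  refine h.congr fun N => ?_
  have hN : ((N : ℝ) + 1) ≠ 0 := by positivity
  simp only [Function.comp_apply, symmAvg,
    eq_sub_of_add_eq (sum_Icc_add_apply_zero_eq_sum_range u N)]
  push_cast
  field_simp

section Sign

variable {Ω : Type*} [MeasurableSpace Ω] {P : Measure Ω} {X Y : Ω → ℝ}

lemma comp_ae_eq_of_ae_eq_one_or_neg_one (hpm : ∀ᵐ ω ∂P, X ω = 1 ∨ X ω = -1) (φ : ℝ → ℝ) :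
    (fun ω => φ (X ω)) =ᵐ[P] fun ω => (φ 1 + φ (-1)) / 2 + (φ 1 - φ (-1)) / 2 * X ω :=
  hpm.mono fun ω h => by rcases h with h | h <;> simp only [h] <;> ring

variable [IsProbabilityMeasure P]

lemma ae_eq_one_or_neg_one_of_measure_eq_half (hX : Measurable X)
    (h1 : P {ω | X ω = 1} = 1 / 2) (h2 : P {ω | X ω = -1} = 1 / 2) :
    ∀ᵐ ω ∂P, X ω = 1 ∨ X ω = -1 := by
  have hA : MeasurableSet {ω | X ω = 1} := hX (measurableSet_singleton 1)
  have hB : MeasurableSet {ω | X ω = -1} := hX (measurableSet_singleton (-1))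
  have hdisj : Disjoint {ω | X ω = 1} {ω | X ω = -1} :=
    Set.disjoint_left.2 fun ω (h : X ω = 1) (h' : X ω = -1) => by linarith
  refine (ae_iff_measure_eq ?_).2 ?_
  · rw [Set.ofPred_or]
    exact (hA.union hB).nullMeasurableSet
  · rw [Set.ofPred_or, measure_union hdisj hB, h1, h2, ENNReal.add_halves, measure_univ]

lemma integral_eq_zero_of_measure_eq_half (hX : Measurable X)
    (h1 : P {ω | X ω = 1} = 1 / 2) (h2 : P {ω | X ω = -1} = 1 / 2) : ∫ ω, X ω ∂P = 0 := by
  have hA : MeasurableSet {ω | X ω = 1} := hX (measurableSet_singleton 1)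
  have hB : MeasurableSet {ω | X ω = -1} := hX (measurableSet_singleton (-1))
  have hX' : X =ᵐ[P] {ω | X ω = 1}.indicator 1 - {ω | X ω = -1}.indicator 1 := by
    filter_upwards [ae_eq_one_or_neg_one_of_measure_eq_half hX h1 h2] with ω hω
    rcases hω with h | h <;> norm_num [Set.indicator, h]
  rw [integral_congr_ae hX', integral_sub' ((integrable_const 1).indicator hA)
      ((integrable_const 1).indicator hB), integral_indicator_one hA, integral_indicator_one hB,
    measureReal_def, measureReal_def, h1, h2, sub_self]

lemma integrable_of_ae_eq_one_or_neg_one (hX : AEStronglyMeasurable X P)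
    (hpm : ∀ᵐ ω ∂P, X ω = 1 ∨ X ω = -1) : Integrable X P :=
  .of_bound hX 1 (hpm.mono fun ω h => by rcases h with h | h <;> simp [h])

lemma integral_comp_of_ae_eq_one_or_neg_one (hX : AEStronglyMeasurable X P)
    (hpm : ∀ᵐ ω ∂P, X ω = 1 ∨ X ω = -1) (h0 : ∫ ω, X ω ∂P = 0) (φ : ℝ → ℝ) :
    ∫ ω, φ (X ω) ∂P = (φ 1 + φ (-1)) / 2 := by
  rw [integral_congr_ae (comp_ae_eq_of_ae_eq_one_or_neg_one hpm φ),
    integral_add (integrable_const _) ((integrable_of_ae_eq_one_or_neg_one hX hpm).const_mul _),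
    integral_const_mul, h0]
  simp

lemma measureReal_preimage_of_ae_eq_one_or_neg_one (hX : Measurable X)
    (hpm : ∀ᵐ ω ∂P, X ω = 1 ∨ X ω = -1) (h0 : ∫ ω, X ω ∂P = 0) {s : Set ℝ} (hs : MeasurableSet s) :
    P.real (X ⁻¹' s) = (s.indicator 1 1 + s.indicator 1 (-1)) / 2 := by
  rw [← integral_indicator_one (hX hs)]
  exact integral_comp_of_ae_eq_one_or_neg_one hX.aestronglyMeasurable hpm h0 (s.indicator 1)

lemma identDistrib_of_ae_eq_one_or_neg_one (hX : Measurable X) (hY : Measurable Y)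
    (hXpm : ∀ᵐ ω ∂P, X ω = 1 ∨ X ω = -1) (hYpm : ∀ᵐ ω ∂P, Y ω = 1 ∨ Y ω = -1)
    (hX0 : ∫ ω, X ω ∂P = 0) (hY0 : ∫ ω, Y ω ∂P = 0) : IdentDistrib X Y P P where
  aemeasurable_fst := hX.aemeasurable
  aemeasurable_snd := hY.aemeasurable
  map_eq := by
    ext s hs
    rw [Measure.map_apply hX hs, Measure.map_apply hY hs,
      ← ENNReal.toReal_eq_toReal_iff' (measure_ne_top _ _) (measure_ne_top _ _), ← measureReal_def,
      ← measureReal_def, measureReal_preimage_of_ae_eq_one_or_neg_one hX hXpm hX0 hs,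
      measureReal_preimage_of_ae_eq_one_or_neg_one hY hYpm hY0 hs]

lemma indepFun_of_ae_eq_one_or_neg_one (hX : Measurable X) (hY : Measurable Y)
    (hXpm : ∀ᵐ ω ∂P, X ω = 1 ∨ X ω = -1) (hYpm : ∀ᵐ ω ∂P, Y ω = 1 ∨ Y ω = -1)
    (hX0 : ∫ ω, X ω ∂P = 0) (hY0 : ∫ ω, Y ω ∂P = 0) (hXY0 : ∫ ω, X ω * Y ω ∂P = 0) :
    IndepFun X Y P := by
  rw [indepFun_iff_integral_comp_mul (hfm := hX) (hgm := hY)]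
  intro φ ψ _ _ _ _
  -- `φ ∘ X` and `ψ ∘ Y` are affine in `X` and `Y`, so only `E X`, `E Y` and `E (X Y)` enter.
  obtain ⟨a, b, hφ⟩ : ∃ a b : ℝ, φ ∘ X =ᵐ[P] fun ω => a + b * X ω :=
    ⟨_, _, comp_ae_eq_of_ae_eq_one_or_neg_one hXpm φ⟩
  obtain ⟨c, d, hψ⟩ : ∃ c d : ℝ, ψ ∘ Y =ᵐ[P] fun ω => c + d * Y ω :=
    ⟨_, _, comp_ae_eq_of_ae_eq_one_or_neg_one hYpm ψ⟩
  have hXYpm : ∀ᵐ ω ∂P, X ω * Y ω = 1 ∨ X ω * Y ω = -1 := by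
    filter_upwards [hXpm, hYpm] with ω h h'
    rcases h with h | h <;> rcases h' with h' | h' <;> simp [h, h']
  have hXi := integrable_of_ae_eq_one_or_neg_one hX.aestronglyMeasurable hXpm
  have hYi := integrable_of_ae_eq_one_or_neg_one hY.aestronglyMeasurable hYpm
  have hXYi : Integrable (fun ω => X ω * Y ω) P :=
    integrable_of_ae_eq_one_or_neg_one (hX.mul hY).aestronglyMeasurable hXYpm
  have hprod : φ ∘ X * ψ ∘ Y =ᵐ[P]
      fun ω => a * c + a * d * Y ω + b * c * X ω + b * d * (X ω * Y ω) := by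
    filter_upwards [hφ, hψ] with ω h h'
    simp only [Pi.mul_apply, h, h']
    ring
  rw [integral_congr_ae hprod, integral_congr_ae hφ, integral_congr_ae hψ,
    integral_add (((integrable_const _).fun_add (hYi.const_mul _)).fun_add (hXi.const_mul _))
      (hXYi.const_mul _),
    integral_add ((integrable_const _).fun_add (hYi.const_mul _)) (hXi.const_mul _),
    integral_add (integrable_const _) (hYi.const_mul _),
    integral_add (integrable_const _) (hXi.const_mul _),
    integral_add (integrable_const _) (hYi.const_mul _)]
  simp [integral_const_mul, hX0, hY0, hXY0]

end Sign

section Products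

variable {Ω ι : Type*} [MeasurableSpace Ω] {P : Measure Ω} {ε : ι → Ω → ℝ}

lemma ae_prod_eq_one_or_neg_one (hpm : ∀ i, ∀ᵐ ω ∂P, ε i ω = 1 ∨ ε i ω = -1) (s : Finset ι) :
    ∀ᵐ ω ∂P, ∏ i ∈ s, ε i ω = 1 ∨ ∏ i ∈ s, ε i ω = -1 :=
  ((eventually_all_finset s).2 fun i _ => hpm i).mono fun _ h => prod_eq_one_or_neg_one h

lemma integral_prod_eq_zero (hind : iIndepFun ε P)
    (hm : ∀ i, Measurable (ε i)) (h0 : ∀ i, ∫ ω, ε i ω ∂P = 0) {s : Finset ι} (hs : s.Nonempty) :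
    ∫ ω, ∏ i ∈ s, ε i ω ∂P = 0 := by
  classical
  obtain ⟨i, hi⟩ := hs
  calc ∫ ω, ∏ j ∈ s, ε j ω ∂P = ∫ ω, (∏ j ∈ s.erase i, ε j) ω * ε i ω ∂P := by
        simp only [prod_apply, prod_erase_mul _ _ hi]
    _ = P[∏ j ∈ s.erase i, ε j] * P[ε i] :=
        (hind.indepFun_finsetProd_of_notMem hm (notMem_erase i s)).integral_fun_mul_eq_mul_integral
          (Finset.aestronglyMeasurable_prod _ fun j _ => (hm j).aestronglyMeasurable)
          (hm i).aestronglyMeasurable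
    _ = 0 := by rw [h0 i, mul_zero]

lemma ae_tendsto_symmAvg {Z : ℤ → Ω → ℝ} (hint : Integrable (Z 0) P)
    (hindep : Pairwise fun i j => IndepFun (Z i) (Z j) P)
    (hident : ∀ i, IdentDistrib (Z i) (Z 0) P P) :
    ∀ᵐ ω ∂P, Tendsto (symmAvg (Z · ω)) atTop (𝓝 P[Z 0]) := by
  have hpos := strong_law_ae_real (fun n : ℕ => Z n) hint
    (fun i j hij => hindep (by exact_mod_cast hij)) fun i => hident i
  have hneg := strong_law_ae_real (fun n : ℕ => Z (-n)) (by simpa using hint)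
    (fun i j hij => hindep (by simpa using hij)) fun i => by simpa using hident (-i)
  filter_upwards [hpos, hneg] with ω h1 h2
  exact tendsto_symmAvg_of_tendsto_cesaro h1 (by simpa using h2)

lemma ae_forall_tendsto_symmAvg_prod [IsProbabilityMeasure P] {ε : ℤ → Ω → ℝ}
    (hind : iIndepFun ε P) (hm : ∀ k, Measurable (ε k))
    (hpm : ∀ k, ∀ᵐ ω ∂P, ε k ω = 1 ∨ ε k ω = -1) (h0 : ∀ k, ∫ ω, ε k ω ∂P = 0) :
    ∀ᵐ ω ∂P, ∀ t : Finset ℤ, t.Nonempty →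
      Tendsto (symmAvg fun k => ∏ j ∈ t, ε (k + j) ω) atTop (𝓝 0) := by
  classical
  refine ae_all_iff.2 fun t => ?_
  rcases t.eq_empty_or_nonempty with rfl | ht
  · exact ae_of_all _ fun ω h => absurd h not_nonempty_empty
  set Z : ℤ → Ω → ℝ := fun i ω => ∏ j ∈ t.map (addLeftEmbedding i), ε j ω
  have hZm : ∀ i, Measurable (Z i) := fun i => Finset.measurable_prod _ fun j _ => hm j
  have hZpm : ∀ i, ∀ᵐ ω ∂P, Z i ω = 1 ∨ Z i ω = -1 := fun i => ae_prod_eq_one_or_neg_one hpm _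
  have hZ0 : ∀ i, ∫ ω, Z i ω ∂P = 0 := fun i => integral_prod_eq_zero hind hm h0 (ht.map)
  have hindepZ : Pairwise fun i j => IndepFun (Z i) (Z j) P := by
    intro i j hij
    refine indepFun_of_ae_eq_one_or_neg_one (hZm i) (hZm j) (hZpm i) (hZpm j) (hZ0 i) (hZ0 j) ?_
    have hprod : (fun ω => Z i ω * Z j ω) =ᵐ[P]
        fun ω => ∏ k ∈ t.map (addLeftEmbedding i) ∆ t.map (addLeftEmbedding j), ε k ω := by
      filter_upwards [ae_all_iff.2 hpm] with ω hω
      exact prod_mul_prod_eq_prod_symmDiff fun k _ => by rcases hω k with h | h <;> simp [h]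
    rw [integral_congr_ae hprod, integral_prod_eq_zero hind hm h0
      (symmDiff_nonempty.2 ((map_addLeftEmbedding_injective ht).ne hij))]
  have hident : ∀ i, IdentDistrib (Z i) (Z 0) P P := fun i =>
    identDistrib_of_ae_eq_one_or_neg_one (hZm i) (hZm 0) (hZpm i) (hZpm 0) (hZ0 i) (hZ0 0)
  have hZi := integrable_of_ae_eq_one_or_neg_one (hZm 0).aestronglyMeasurable (hZpm 0)
  filter_upwards [ae_tendsto_symmAvg hZi hindepZ hident] with ω hω _
  rw [hZ0 0] at hω
  simpa [Z, prod_map] using hω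

end Products

noncomputable def dimerCorrelation (n : ℤ) : ℝ := if n = 0 then 1 else if Even n then 1 / 2 else 0

section Dimer

variable {x V : ℤ → ℝ}

lemma tendsto_symmAvg_bond
    (hmix : ∀ t : Finset ℤ, t.Nonempty → Tendsto (symmAvg fun k => ∏ j ∈ t, x (k + j)) atTop (𝓝 0))
    (e : ℤ) : Tendsto (symmAvg fun k => x (k + e) * x (k + e + 1)) atTop (𝓝 0) := by
  have hbond : (fun k => x (k + e) * x (k + e + 1)) = fun k => ∏ j ∈ {e, e + 1}, x (k + j) := by
    funext k
    rw [prod_pair (by omega), add_assoc]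
  rw [hbond]
  exact hmix _ (insert_nonempty _ _)

lemma tendsto_symmAvg_bond_mul_bond (hx : ∀ k, x k = 1 ∨ x k = -1)
    (hmix : ∀ t : Finset ℤ, t.Nonempty → Tendsto (symmAvg fun k => ∏ j ∈ t, x (k + j)) atTop (𝓝 0))
    {d : ℤ} (hd : d ≠ 0) :
    Tendsto (symmAvg fun k => x k * x (k + 1) * (x (k + d) * x (k + d + 1))) atTop (𝓝 0) := by
  have hne : ({0, 1} : Finset ℤ) ≠ {d, d + 1} := by
    intro h
    have h0 : (0 : ℤ) ∈ ({d, d + 1} : Finset ℤ) := h ▸ by simp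
    have h1 : (1 : ℤ) ∈ ({d, d + 1} : Finset ℤ) := h ▸ by simp
    simp only [mem_insert, mem_singleton] at h0 h1
    omega
  have hsymm : (fun k => x k * x (k + 1) * (x (k + d) * x (k + d + 1)))
      = fun k => ∏ j ∈ {0, 1} ∆ {d, d + 1}, x (k + j) := by
    funext k
    rw [← prod_mul_prod_eq_prod_symmDiff fun j _ => by rcases hx (k + j) with h | h <;> simp [h],
      prod_pair zero_ne_one, prod_pair (by omega), add_zero, add_assoc]
  rw [hsymm]
  exact hmix _ (symmDiff_nonempty.2 hne)

lemma dimer_eq_one_or_neg_one (hx : ∀ k, x k = 1 ∨ x k = -1) (hV_even : ∀ k, V (2 * k) = 1)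
    (hV_odd : ∀ k, V (2 * k + 1) = x k * x (k + 1)) (m : ℤ) : V m = 1 ∨ V m = -1 := by
  obtain ⟨k, rfl | rfl⟩ := Int.even_or_odd' m
  · exact .inl (hV_even k)
  · rw [hV_odd]
    rcases hx k with h | h <;> rcases hx (k + 1) with h' | h' <;> simp [h, h']

lemma tendsto_symmAvg_dimer (hx : ∀ k, x k = 1 ∨ x k = -1)
    (hmix : ∀ t : Finset ℤ, t.Nonempty → Tendsto (symmAvg fun k => ∏ j ∈ t, x (k + j)) atTop (𝓝 0))
    (hV_even : ∀ k, V (2 * k) = 1) (hV_odd : ∀ k, V (2 * k + 1) = x k * x (k + 1)) :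
    Tendsto (symmAvg V) atTop (𝓝 (1 / 2)) := by
  have hbound : ∀ m, |V m| ≤ 1 := fun m => by
    rcases dimer_eq_one_or_neg_one hx hV_even hV_odd m with h | h <;> simp [h]
  refine Tendsto.symmAvg_of_pairs hbound ?_
  have hpairs : (fun k => V (2 * k) + V (2 * k + 1)) = fun k => 1 + x k * x (k + 1) := by
    funext k
    rw [hV_even, hV_odd]
  have h := (tendsto_symmAvg_bond hmix 0).const_add 1
  simp only [add_zero] at h
  rw [hpairs]
  exact h.congr fun N => by rw [symmAvg_add, symmAvg_const]

lemma tendsto_symmAvg_dimer_pairs_two_mul (hx : ∀ k, x k = 1 ∨ x k = -1)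
    (hmix : ∀ t : Finset ℤ, t.Nonempty → Tendsto (symmAvg fun k => ∏ j ∈ t, x (k + j)) atTop (𝓝 0))
    (hV_even : ∀ k, V (2 * k) = 1) (hV_odd : ∀ k, V (2 * k + 1) = x k * x (k + 1)) (d : ℤ) :
    Tendsto (symmAvg fun k => V (2 * k) * V (2 * k + 2 * d) + V (2 * k + 1) * V (2 * k + 1 + 2 * d))
      atTop (𝓝 (2 * dimerCorrelation (2 * d))) := by
  have hpairs : (fun k => V (2 * k) * V (2 * k + 2 * d) + V (2 * k + 1) * V (2 * k + 1 + 2 * d))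
      = fun k => 1 + x k * x (k + 1) * (x (k + d) * x (k + d + 1)) := by
    funext k
    rw [show 2 * k + 2 * d = 2 * (k + d) by ring,
      show 2 * k + 1 + 2 * d = 2 * (k + d) + 1 by ring, hV_even, hV_even, hV_odd, hV_odd]
    ring
  rw [hpairs]
  rcases eq_or_ne d 0 with rfl | hd
  · have hsq : ∀ k, x k * x (k + 1) * (x (k + 0) * x (k + 0 + 1)) = 1 := fun k => by
      rcases hx k with h | h <;> rcases hx (k + 1) with h' | h' <;> simp [h, h']
    simp only [hsq]
    exact tendsto_const_nhds.congr fun N => by rw [symmAvg_const]; norm_num [dimerCorrelation]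
  · have h := (tendsto_symmAvg_bond_mul_bond hx hmix hd).const_add 1
    rw [add_zero] at h
    rw [show 2 * dimerCorrelation (2 * d) = 1 by simp [dimerCorrelation, hd]]
    exact h.congr fun N => by rw [symmAvg_add, symmAvg_const]

lemma tendsto_symmAvg_dimer_pairs_two_mul_add_one (hmix : ∀ t : Finset ℤ, t.Nonempty →
      Tendsto (symmAvg fun k => ∏ j ∈ t, x (k + j)) atTop (𝓝 0))
    (hV_even : ∀ k, V (2 * k) = 1) (hV_odd : ∀ k, V (2 * k + 1) = x k * x (k + 1)) (d : ℤ) :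
    Tendsto (symmAvg fun k => V (2 * k) * V (2 * k + (2 * d + 1))
        + V (2 * k + 1) * V (2 * k + 1 + (2 * d + 1)))
      atTop (𝓝 (2 * dimerCorrelation (2 * d + 1))) := by
  have hpairs : (fun k => V (2 * k) * V (2 * k + (2 * d + 1))
        + V (2 * k + 1) * V (2 * k + 1 + (2 * d + 1)))
      = fun k => x (k + d) * x (k + d + 1) + x k * x (k + 1) := by
    funext k
    rw [show 2 * k + (2 * d + 1) = 2 * (k + d) + 1 by ring,
      show 2 * k + 1 + (2 * d + 1) = 2 * (k + d + 1) by ring, hV_even, hV_even, hV_odd, hV_odd]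
    ring
  have hη : dimerCorrelation (2 * d + 1) = 0 := by
    rw [dimerCorrelation, if_neg (by omega),
      if_neg (Int.not_even_iff_odd.2 (odd_two_mul_add_one d))]
  have h := (tendsto_symmAvg_bond hmix d).add (tendsto_symmAvg_bond hmix 0)
  simp only [add_zero] at h
  rw [hpairs, hη, mul_zero]
  exact h.congr fun N => (symmAvg_add N _ _).symm

lemma tendsto_symmAvg_dimer_mul (hx : ∀ k, x k = 1 ∨ x k = -1)
    (hmix : ∀ t : Finset ℤ, t.Nonempty → Tendsto (symmAvg fun k => ∏ j ∈ t, x (k + j)) atTop (𝓝 0))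
    (hV_even : ∀ k, V (2 * k) = 1) (hV_odd : ∀ k, V (2 * k + 1) = x k * x (k + 1)) (n : ℤ) :
    Tendsto (symmAvg fun m => V m * V (m + n)) atTop (𝓝 (dimerCorrelation n)) := by
  have hbound : ∀ m, |V m * V (m + n)| ≤ 1 := fun m => by
    rcases dimer_eq_one_or_neg_one hx hV_even hV_odd m with h | h <;>
      rcases dimer_eq_one_or_neg_one hx hV_even hV_odd (m + n) with h' | h' <;> simp [h, h']
  have hpairs : Tendsto
      (symmAvg fun k => V (2 * k) * V (2 * k + n) + V (2 * k + 1) * V (2 * k + 1 + n))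
      atTop (𝓝 (2 * dimerCorrelation n)) := by
    obtain ⟨d, rfl | rfl⟩ := Int.even_or_odd' n
    exacts [tendsto_symmAvg_dimer_pairs_two_mul hx hmix hV_even hV_odd d,
      tendsto_symmAvg_dimer_pairs_two_mul_add_one hmix hV_even hV_odd d]
  simpa using hpairs.symmAvg_of_pairs hbound

end Dimer

lemma tendsto_symmAvg_conj_mul_of_eq_one_or_neg_one {u : ℤ → ℝ} (hu : ∀ m, u m = 1 ∨ u m = -1)
    (h : ℝ → ℂ) {μ γ : ℝ} (n : ℤ) (hμ : Tendsto (symmAvg u) atTop (𝓝 μ))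
    (hγ : Tendsto (symmAvg fun m => u m * u (m + n)) atTop (𝓝 γ)) :
    Tendsto (symmAvg fun m => conj (h (u m)) * h (u (m + n))) atTop
      (𝓝 ((‖h 1 + h (-1)‖ ^ 2 / 4 + (‖h 1‖ ^ 2 - ‖h (-1)‖ ^ 2) / 2 * μ
        + ‖h 1 - h (-1)‖ ^ 2 / 4 * γ : ℝ))) := by
  set a := (h 1 + h (-1)) / 2
  set b := (h 1 - h (-1)) / 2
  have hh : ∀ m, h (u m) = a + b * u m := fun m => by
    rcases hu m with hm | hm <;> simp only [hm] <;> push_cast <;> ring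
  have hsq : ∀ z : ℂ, (‖z‖ : ℂ) ^ 2 = conj z * z := fun z => by
    rw [mul_comm, Complex.mul_conj, Complex.normSq_eq_norm_sq, Complex.ofReal_pow]
  have hbound : ∀ m, |u m| ≤ 1 := fun m => by rcases hu m with hm | hm <;> simp [hm]
  have hlim := (((tendsto_const_nhds (x := conj a * a)).add
      ((hμ.symmAvg_comp_add hbound n).ofReal.const_mul (conj a * b))).add
      (hμ.ofReal.const_mul (conj b * a))).add (hγ.ofReal.const_mul (conj b * b))
  have hexp : (fun m => conj (h (u m)) * h (u (m + n))) = fun m => conj a * a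
      + conj a * b * ((u (m + n) : ℝ) : ℂ) + conj b * a * ((u m : ℝ) : ℂ)
      + conj b * b * ((u m * u (m + n) : ℝ) : ℂ) := by
    funext m
    simp only [hh, map_add, map_mul, Complex.conj_ofReal]
    push_cast
    ring
  convert hlim using 1
  · ext N
    simp only [hexp, symmAvg_add, symmAvg_const, symmAvg_const_mul, symmAvg_ofReal]
  · push_cast
    simp only [hsq, a, b, map_add, map_sub, map_div₀, Complex.conj_ofNat]
    congr 1
    ring

/-- For the factor sequence `v n = - w n · w (n+1)` of the DMS with
general complex weights `h₊, h₋` (applied to the values ±1), almost surely, for every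
`n : ℤ`, the averaged correlation sums converge to
`(|h₊+h₋|² + |h₊|² - |h₋|²)/4 + (|h₊-h₋|²/4)·η_Y n`. -/
theorem dms_factor_autocorrelation_general_weights
    {Ω : Type*} [MeasurableSpace Ω] (P : Measure Ω) [IsProbabilityMeasure P]
    (ε : ℤ → Ω → ℝ) (hmeas : ∀ k, Measurable (ε k))
    (hindep : iIndepFun ε P)
    (hdist : ∀ k, P {ω | ε k ω = 1} = 1/2 ∧ P {ω | ε k ω = -1} = 1/2)
    (w : ℤ → Ω → ℝ)
    (hw_even : ∀ k ω, w (2*k) ω = ε k ω)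
    (hw_odd : ∀ k ω, w (2*k+1) ω = - ε k ω)
    (v : ℤ → Ω → ℝ)
    (hv : ∀ n ω, v n ω = - (w n ω * w (n+1) ω))
    (hp hm : ℂ) (h : ℝ → ℂ) (hh1 : h 1 = hp) (hhm1 : h (-1) = hm)
    (ηY : ℤ → ℝ)
    (hηY0 : ηY 0 = 1)
    (hηYeven : ∀ n : ℤ, n ≠ 0 → Even n → ηY n = 1/2)
    (hηYodd : ∀ n : ℤ, Odd n → ηY n = 0) :
    ∀ᵐ ω ∂P, ∀ n : ℤ,
      Tendsto (fun N : ℕ =>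
          (1 / (2*(N:ℝ)+1) : ℂ) *
            ∑ m ∈ Finset.Icc (-(N:ℤ)) (N:ℤ),
              (starRingEnd ℂ) (h (v m ω)) * h (v (m+n) ω))
        atTop
        (nhds ((((‖hp + hm‖)^2 + (‖hp‖)^2
            - (‖hm‖)^2) / 4 : ℂ)
          + ((‖hp - hm‖)^2 / 4) * (ηY n : ℂ))) := by
  have hpm k := ae_eq_one_or_neg_one_of_measure_eq_half (hmeas k) (hdist k).1 (hdist k).2
  have h0 k := integral_eq_zero_of_measure_eq_half (hmeas k) (hdist k).1 (hdist k).2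
  filter_upwards [ae_all_iff.2 hpm, ae_forall_tendsto_symmAvg_prod hindep hmeas hpm h0]
    with ω hω hmix n
  have hV_even k : v (2 * k) ω = 1 := by
    rw [hv, hw_even, hw_odd]
    rcases hω k with h | h <;> simp [h]
  have hV_odd k : v (2 * k + 1) ω = ε k ω * ε (k + 1) ω := by
    rw [hv, hw_odd, show 2 * k + 1 + 1 = 2 * (k + 1) by ring, hw_even]
    ring
  have hη : ηY n = dimerCorrelation n := by
    rw [dimerCorrelation]
    split_ifs with hn he
    · rw [hn, hηY0]
    · exact hηYeven n hn he
    · exact hηYodd n (Int.not_even_iff_odd.1 he)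
  have hlim := tendsto_symmAvg_conj_mul_of_eq_one_or_neg_one
    (dimer_eq_one_or_neg_one hω hV_even hV_odd) h n
    (tendsto_symmAvg_dimer hω hmix hV_even hV_odd)
    (tendsto_symmAvg_dimer_mul (V := (v · ω)) hω hmix hV_even hV_odd n)
  convert hlim using 1
  · ext N
    simp [symmAvg, div_eq_inv_mul]
  · rw [hh1, hhm1, hη]
    push_cast
    congr 1
    ring
end

section
/- Almost surely, the limit lim_{N→∞} (2/(2N+1)) · Σ_{n=-N}^{N} (−1)^n · w_n · w_{n+1} exists and equals −1. (This limit defines the value of the eigenfunction ψ of the shift, for the eigenvalue −1 of the dynamical spectrum, on the even-placement component of the DMS.) -/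
/-!
On an even site the summand is `(-1)^(2k) ε_k (-ε_k) = -1`, on an odd site `2k+1` it is
`ε_k ε_(k+1)`. So the sum over `[-N, N]` is minus the number of even sites, about `-N`, plus
sums of products of neighbouring signs along the two half-lines. Splitting these by the parity
of `k` gives families `ε_(2j) ε_(2j+1)` and `ε_(2j+1) ε_(2j+2)` built on disjoint pairs of
independent signs: they are pairwise independent, identically distributed and centred, so their
averages vanish almost surely by the strong law of large numbers.
-/

open MeasureTheory ProbabilityTheory Filter Finset Topology
open scoped ENNReal

theorem sum_range_eq_sum_even_add_sum_odd {M : Type*} [AddCommMonoid M] (s : ℕ → M) (N : ℕ) :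
    ∑ n ∈ range N, s n =
      ∑ k ∈ range ((N + 1) / 2), s (2 * k) + ∑ k ∈ range (N / 2), s (2 * k + 1) := by
  induction N with
  | zero => simp
  | succ N ih =>
    rw [sum_range_succ, ih]
    obtain ⟨K, rfl | rfl⟩ := Nat.even_or_odd' N
    · rw [show (2 * K + 1) / 2 = K by omega, show 2 * K / 2 = K by omega,
        show (2 * K + 1 + 1) / 2 = K + 1 by omega, sum_range_succ]
      abel
    · rw [show (2 * K + 1 + 1) / 2 = K + 1 by omega, show (2 * K + 1 + 1 + 1) / 2 = K + 1 by omega,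
        show (2 * K + 1) / 2 = K by omega, sum_range_succ (fun k => s (2 * k + 1))]
      abel

theorem tendsto_div_of_abs_sub_mul_le {c d : ℕ → ℝ} {r C : ℝ} (hd : Tendsto d atTop atTop)
    (hcd : ∀ N, |c N - r * d N| ≤ C) : Tendsto (fun N => c N / d N) atTop (𝓝 r) := by
  have hsmall : Tendsto (fun N => (c N - r * d N) / d N) atTop (𝓝 0) :=
    squeeze_zero_norm' ((hd.eventually_gt_atTop 0).mono fun N hN => by
      rw [norm_div, Real.norm_of_nonneg hN.le]
      exact div_le_div_of_nonneg_right (hcd N) hN.le) (tendsto_const_nhds.div_atTop hd)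
  refine (hsmall.const_add r).congr' ?_ |>.trans (by rw [add_zero])
  filter_upwards [hd.eventually_gt_atTop 0] with N hN
  rw [sub_div, mul_div_cancel_right₀ _ hN.ne']
  ring

theorem Filter.Tendsto.comp_div_of_ratio {u : ℕ → ℝ} {a r : ℝ} {c : ℕ → ℕ} {d : ℕ → ℝ}
    (hu : Tendsto (fun n : ℕ => u n / n) atTop (𝓝 a)) (hc : Tendsto c atTop atTop)
    (hcd : Tendsto (fun N => (c N : ℝ) / d N) atTop (𝓝 r)) :
    Tendsto (fun N => u (c N) / d N) atTop (𝓝 (a * r)) := by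
  refine ((hu.comp hc).mul hcd).congr' ?_
  filter_upwards [hc.eventually_gt_atTop 0] with N hN
  exact div_mul_div_cancel₀ (by positivity)

theorem tendsto_natCast_div_of_two_mul_near {c : ℕ → ℕ}
    (hc : ∀ N, c N * 2 ≤ N + 1 ∧ N ≤ c N * 2 + 1) :
    Tendsto (fun N : ℕ => (c N : ℝ) / N) atTop (𝓝 (1 / 2)) := by
  refine tendsto_div_of_abs_sub_mul_le (C := 1) tendsto_natCast_atTop_atTop fun N => ?_
  obtain ⟨h₁, h₂⟩ := hc N
  have h₁' : (c N : ℝ) * 2 ≤ N + 1 := by exact_mod_cast h₁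
  have h₂' : (N : ℝ) ≤ c N * 2 + 1 := by exact_mod_cast h₂
  rw [abs_le]
  constructor <;> linarith

theorem tendsto_sum_range_const_div (a : ℝ) :
    Tendsto (fun K : ℕ => (∑ _k ∈ range K, a) / K) atTop (𝓝 a) := by
  refine tendsto_const_nhds.congr' ?_
  filter_upwards [eventually_ne_atTop 0] with K hK
  rw [sum_const, card_range, nsmul_eq_mul, mul_div_cancel_left₀ _ (by positivity)]

theorem tendsto_avg_of_even_odd {s : ℕ → ℝ} {a b : ℝ}
    (he : Tendsto (fun K : ℕ => (∑ k ∈ range K, s (2 * k)) / K) atTop (𝓝 a))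
    (ho : Tendsto (fun K : ℕ => (∑ k ∈ range K, s (2 * k + 1)) / K) atTop (𝓝 b)) :
    Tendsto (fun N : ℕ => (∑ n ∈ range N, s n) / N) atTop (𝓝 ((a + b) / 2)) := by
  have hceil := he.comp_div_of_ratio (c := fun N => (N + 1) / 2)
    (tendsto_atTop_atTop.2 fun K => ⟨2 * K, fun N hN => by omega⟩)
    (tendsto_natCast_div_of_two_mul_near fun N => by omega)
  have hfloor := ho.comp_div_of_ratio (c := fun N => N / 2)
    (tendsto_atTop_atTop.2 fun K => ⟨2 * K, fun N hN => by omega⟩)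
    (tendsto_natCast_div_of_two_mul_near fun N => by omega)
  rw [show (a + b) / 2 = a * (1 / 2) + b * (1 / 2) by ring]
  refine (hceil.add hfloor).congr fun N => ?_
  rw [sum_range_eq_sum_even_add_sum_odd s N, add_div]

theorem sum_Icc_neg_natCast {M : Type*} [AddCommMonoid M] (f : ℤ → M) (N : ℕ) :
    ∑ n ∈ Icc (-(N : ℤ)) N, f n = ∑ n ∈ range (N + 1), f n + ∑ n ∈ range N, f (-1 - n) := by
  induction N with
  | zero => simp
  | succ N ih =>
    have hIcc : Icc (-((N + 1 : ℕ) : ℤ)) (N + 1 : ℕ) =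
        insert ((N : ℤ) + 1) (insert (-1 - (N : ℤ)) (Icc (-(N : ℤ)) N)) := by
      ext n; simp only [mem_Icc, mem_insert]; omega
    rw [hIcc, sum_insert (by simp only [mem_insert, mem_Icc]; omega),
      sum_insert (by simp only [mem_Icc]; omega), ih, sum_range_succ (n := N + 1),
      sum_range_succ (fun n : ℕ => f (-1 - n)) N]
    push_cast
    abel

section Dimer

variable {e w : ℤ → ℝ}

theorem neg_one_zpow_mul_dimer_even (hw_even : ∀ k, w (2 * k) = e k)
    (hw_odd : ∀ k, w (2 * k + 1) = -e k) {k : ℤ} (he : e k * e k = 1) :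
    (-1 : ℝ) ^ (2 * k) * w (2 * k) * w (2 * k + 1) = -1 := by
  rw [(even_two_mul k).neg_one_zpow, hw_even, hw_odd, mul_neg, one_mul, he]

theorem neg_one_zpow_mul_dimer_odd (hw_even : ∀ k, w (2 * k) = e k)
    (hw_odd : ∀ k, w (2 * k + 1) = -e k) (k : ℤ) :
    (-1 : ℝ) ^ (2 * k + 1) * w (2 * k + 1) * w (2 * k + 1 + 1) = e k * e (k + 1) := by
  rw [(odd_two_mul_add_one k).neg_one_zpow, hw_odd, show 2 * k + 1 + 1 = 2 * (k + 1) by ring,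
    hw_even]
  ring

theorem tendsto_two_div_mul_sum_Icc_of_dimer (hw_even : ∀ k, w (2 * k) = e k)
    (hw_odd : ∀ k, w (2 * k + 1) = -e k) (he : ∀ k, e k * e k = 1)
    (hfwd : Tendsto (fun K : ℕ => (∑ k ∈ range K, e k * e (k + 1)) / K) atTop (𝓝 0))
    (hbwd : Tendsto (fun K : ℕ => (∑ k ∈ range K, e (-1 - k) * e (-1 - k + 1)) / K) atTop (𝓝 0)) :
    Tendsto (fun N : ℕ => 2 / (2 * (N : ℝ) + 1) *
      ∑ n ∈ Icc (-(N : ℤ)) N, (-1 : ℝ) ^ n * w n * w (n + 1)) atTop (𝓝 (-1)) := by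
  set t : ℤ → ℝ := fun n => (-1 : ℝ) ^ n * w n * w (n + 1)
  have heven (k : ℤ) : t (2 * k) = -1 := neg_one_zpow_mul_dimer_even hw_even hw_odd (he k)
  have hodd (k : ℤ) : t (2 * k + 1) = e k * e (k + 1) := neg_one_zpow_mul_dimer_odd hw_even hw_odd k
  have hpos : Tendsto (fun N : ℕ => (∑ n ∈ range N, t n) / N) atTop (𝓝 ((-1 + 0) / 2)) := by
    refine tendsto_avg_of_even_odd ((tendsto_sum_range_const_div (-1)).congr fun K => ?_)
      (hfwd.congr fun K => ?_)
    · push_cast; simp only [heven]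
    · push_cast; simp only [hodd]
  have hneg : Tendsto (fun N : ℕ => (∑ n ∈ range N, t (-1 - n)) / N) atTop (𝓝 ((0 + -1) / 2)) := by
    refine tendsto_avg_of_even_odd (hbwd.congr fun K => ?_)
      ((tendsto_sum_range_const_div (-1)).congr fun K => ?_)
    · push_cast
      refine congrArg (· / _) (sum_congr rfl fun k _ => ?_)
      rw [show -1 - 2 * (k : ℤ) = 2 * (-1 - k) + 1 by ring, hodd]
    · push_cast
      refine congrArg (· / _) (sum_congr rfl fun k _ => ?_)
      rw [show -1 - (2 * (k : ℤ) + 1) = 2 * (-1 - k) by ring, heven]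
  have hratio (c : ℕ → ℕ) (hc : ∀ N, c N = N ∨ c N = N + 1) :
      Tendsto (fun N : ℕ => (c N : ℝ) / (N + 1 / 2)) atTop (𝓝 1) := by
    refine tendsto_div_of_abs_sub_mul_le (C := 1 / 2)
      (tendsto_atTop_add_const_right _ _ tendsto_natCast_atTop_atTop) fun N => ?_
    rcases hc N with h | h <;> rw [h] <;> norm_num
  have hlim :=
    (hpos.comp_div_of_ratio (tendsto_add_atTop_nat 1) (hratio (· + 1) fun N => by simp)).add
      (hneg.comp_div_of_ratio tendsto_id (hratio id fun N => by simp))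
  rw [show (-1 : ℝ) = (-1 + 0) / 2 * 1 + (0 + -1) / 2 * 1 by norm_num]
  refine hlim.congr fun N => ?_
  simp only [id, sum_Icc_neg_natCast]
  field_simp

end Dimer

section Rademacher

variable {Ω : Type*} [MeasurableSpace Ω] {P : Measure Ω} [IsProbabilityMeasure P] {f g : Ω → ℝ}

def IsRademacher (P : Measure Ω) (f : Ω → ℝ) : Prop :=
  P {ω | f ω = 1} = 1 / 2 ∧ P {ω | f ω = -1} = 1 / 2

theorem IsRademacher.ae_eq_one_or_eq_neg_one (h : IsRademacher P f) (hf : Measurable f) :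
    ∀ᵐ ω ∂P, f ω = 1 ∨ f ω = -1 := by
  have hA : MeasurableSet {ω | f ω = 1} := hf (measurableSet_singleton _)
  have hB : MeasurableSet {ω | f ω = -1} := hf (measurableSet_singleton _)
  have hdisj : Disjoint {ω | f ω = 1} {ω | f ω = -1} :=
    (Set.disjoint_singleton.2 (by norm_num)).preimage f
  refine (ae_mem_iff_measure_eq (hA.union hB).nullMeasurableSet).2 ?_
  rw [measure_union hdisj hB, h.1, h.2, ENNReal.add_halves, measure_univ]

theorem IsRademacher.map_eq (h : IsRademacher P f) (hf : Measurable f) :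
    P.map f = (1 / 2 : ℝ≥0∞) • Measure.dirac 1 + (1 / 2 : ℝ≥0∞) • Measure.dirac (-1) := by
  have hB : MeasurableSet {ω | f ω = -1} := hf (measurableSet_singleton _)
  have hdisj : Disjoint {ω | f ω = 1} {ω | f ω = -1} :=
    (Set.disjoint_singleton.2 (by norm_num)).preimage f
  have hsplit : P = P.restrict {ω | f ω = 1} + P.restrict {ω | f ω = -1} := by
    rw [← Measure.restrict_union hdisj hB, Measure.restrict_eq_self_of_ae_mem]
    exact h.ae_eq_one_or_eq_neg_one hf
  have hfiber (c : ℝ) :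
      (P.restrict {ω | f ω = c}).map f = P {ω | f ω = c} • Measure.dirac c := by
    have hc : MeasurableSet {ω | f ω = c} := hf (measurableSet_singleton c)
    rw [Measure.map_congr (g := fun _ => c) ((ae_restrict_mem hc).mono fun ω hω => hω),
      Measure.map_const, Measure.restrict_apply_univ]
  conv_lhs => rw [hsplit]
  rw [Measure.map_add _ _ hf, hfiber, hfiber, h.1, h.2]

theorem IsRademacher.integral_eq_zero (h : IsRademacher P f) (hf : Measurable f) :
    ∫ ω, f ω ∂P = 0 := by
  have hdirac (c : ℝ) : Integrable (fun x => x) ((1 / 2 : ℝ≥0∞) • Measure.dirac c) :=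
    (integrable_dirac enorm_lt_top).smul_measure (by simp)
  rw [← integral_map (f := fun x => x) hf.aemeasurable aestronglyMeasurable_id, h.map_eq hf,
    integral_add_measure (hdirac _) (hdirac _), integral_smul_measure, integral_smul_measure,
    integral_dirac, integral_dirac]
  norm_num

theorem IsRademacher.integrable (h : IsRademacher P f) (hf : Measurable f) : Integrable f P :=
  Integrable.of_bound hf.aestronglyMeasurable 1 <| (h.ae_eq_one_or_eq_neg_one hf).mono
    fun ω hω => by rcases hω with h | h <;> simp [h]

theorem IsRademacher.identDistrib (hf : IsRademacher P f) (hg : IsRademacher P g)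
    (hf_meas : Measurable f) (hg_meas : Measurable g) : IdentDistrib f g P P where
  aemeasurable_fst := hf_meas.aemeasurable
  aemeasurable_snd := hg_meas.aemeasurable
  map_eq := by rw [hf.map_eq hf_meas, hg.map_eq hg_meas]

end Rademacher

section IndependentSigns

variable {Ω : Type*} [MeasurableSpace Ω] {P : Measure Ω} [IsProbabilityMeasure P]
  {ε : ℤ → Ω → ℝ}

theorem identDistrib_mul_of_iIndepFun (hmeas : ∀ k, Measurable (ε k)) (hindep : iIndepFun ε P)
    (hdist : ∀ k, IsRademacher P (ε k))
    {i j k l : ℤ} (hij : i ≠ j) (hkl : k ≠ l) :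
    IdentDistrib (ε i * ε j) (ε k * ε l) P P := by
  have hident (a b : ℤ) : IdentDistrib (ε a) (ε b) P P :=
    (hdist a).identDistrib (hdist b) (hmeas a) (hmeas b)
  exact ((hident i k).prodMk (hident j l) (hindep.indepFun hij) (hindep.indepFun hkl)).comp
    (measurable_fst.mul measurable_snd)

theorem ae_tendsto_avg_mul_succ_of_separated (hmeas : ∀ k, Measurable (ε k)) (hindep : iIndepFun ε P)
    (hdist : ∀ k, IsRademacher P (ε k))
    (g : ℕ → ℤ) (hg : Pairwise fun i j => 2 ≤ |g i - g j|) :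
    ∀ᵐ ω ∂P, Tendsto (fun n : ℕ => (∑ i ∈ range n, ε (g i) ω * ε (g i + 1) ω) / n)
      atTop (𝓝 0) := by
  set X : ℕ → Ω → ℝ := fun i => ε (g i) * ε (g i + 1)
  have hsucc (a : ℤ) : a ≠ a + 1 := by omega
  have hindep0 : IndepFun (ε (g 0)) (ε (g 0 + 1)) P := hindep.indepFun (hsucc _)
  have hint (a : ℤ) : Integrable (ε a) P := (hdist a).integrable (hmeas a)
  have hmean : P[X 0] = 0 := by
    rw [hindep0.integral_mul_eq_mul_integral (hint _).aestronglyMeasurable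
      (hint _).aestronglyMeasurable, (hdist _).integral_eq_zero (hmeas _), zero_mul]
  have hpair : Pairwise (Function.onFun (· ⟂ᵢ[P] ·) X) := fun i j hij => by
    have h : 2 ≤ |g i - g j| := hg hij
    rw [le_abs] at h
    exact hindep.indepFun_mul_mul hmeas _ _ _ _ (by omega) (by omega) (by omega) (by omega)
  filter_upwards [strong_law_ae X (hindep0.integrable_mul (hint _) (hint _)) hpair
    fun i => identDistrib_mul_of_iIndepFun hmeas hindep hdist (hsucc _) (hsucc _)] with ω hω
  rw [hmean] at hω
  exact hω.congr fun n => by rw [smul_eq_mul, inv_mul_eq_div]; rfl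

theorem ae_tendsto_avg_mul_succ (hmeas : ∀ k, Measurable (ε k)) (hindep : iIndepFun ε P)
    (hdist : ∀ k, IsRademacher P (ε k))
    (g : ℕ → ℤ) (hg : ∀ i j, |g i - g j| = |(i : ℤ) - j|) :
    ∀ᵐ ω ∂P, Tendsto (fun n : ℕ => (∑ k ∈ range n, ε (g k) ω * ε (g k + 1) ω) / n)
      atTop (𝓝 0) := by
  have hsep (r : ℕ) : Pairwise fun i j => 2 ≤ |g (2 * i + r) - g (2 * j + r)| := by
    intro i j hij
    rw [hg, le_abs]
    omega
  filter_upwards [ae_tendsto_avg_mul_succ_of_separated hmeas hindep hdist _ (hsep 0),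
    ae_tendsto_avg_mul_succ_of_separated hmeas hindep hdist _ (hsep 1)] with ω heven hodd
  have := tendsto_avg_of_even_odd (s := fun k => ε (g k) ω * ε (g k + 1) ω) heven hodd
  rwa [add_zero, zero_div] at this

end IndependentSigns

/-- For the even-placement realisation of the DMS, the eigenfunction
limit `lim_{N→∞} (2/(2N+1)) Σ_{n=-N}^{N} (-1)^n w n · w (n+1)` almost surely exists
and equals `-1`. -/
theorem dms_eigenfunction_value
    {Ω : Type*} [MeasurableSpace Ω] (P : Measure Ω) [IsProbabilityMeasure P]
    (ε : ℤ → Ω → ℝ) (hmeas : ∀ k, Measurable (ε k))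
    (hindep : iIndepFun ε P)
    (hdist : ∀ k, P {ω | ε k ω = 1} = 1/2 ∧ P {ω | ε k ω = -1} = 1/2)
    (w : ℤ → Ω → ℝ)
    (hw_even : ∀ k ω, w (2*k) ω = ε k ω)
    (hw_odd : ∀ k ω, w (2*k+1) ω = - ε k ω) :
    ∀ᵐ ω ∂P,
      Tendsto (fun N : ℕ =>
          (2 / (2*(N:ℝ)+1)) *
            ∑ n ∈ Finset.Icc (-(N:ℤ)) (N:ℤ), (-1 : ℝ)^n * w n ω * w (n+1) ω)
        atTop (nhds (-1)) := by
  have hrad : ∀ k, IsRademacher P (ε k) := hdist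
  have hsigns : ∀ᵐ ω ∂P, ∀ k, ε k ω * ε k ω = 1 := ae_all_iff.2 fun k =>
    ((hrad k).ae_eq_one_or_eq_neg_one (hmeas k)).mono fun ω h => by
      rcases h with h | h <;> simp [h]
  have hfwd := ae_tendsto_avg_mul_succ hmeas hindep hrad (fun k => k) fun i j => rfl
  have hbwd := ae_tendsto_avg_mul_succ hmeas hindep hrad (fun k => -1 - k) fun i j => by
    rw [show -1 - (i : ℤ) - (-1 - j) = -(i - j) by ring, abs_neg]
  filter_upwards [hsigns, hfwd, hbwd] with ω hε hf hb
  exact tendsto_two_div_mul_sum_Icc_of_dimer (fun k => hw_even k ω) (fun k => hw_odd k ω) hε hf hb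
end

section
/- The image of the set of even-placement dimeric sequences under φ equals the set of all sequences v : ℤ → ℝ with values in {1, −1} satisfying v_{2k} = 1 for all k ∈ ℤ. That is: {φ(w) : w : ℤ → ℝ, w takes values in {1,−1}, and w_{2k+1} = −w_{2k} for all k ∈ ℤ} = {v : ℤ → ℝ : v takes values in {1,−1} and v_{2k} = 1 for all k ∈ ℤ}. -/
/-!
For `n = 2k` the dimer condition gives `φ(w)_{2k} = w_{2k}² = 1`, so the image lies in the
right-hand set. Conversely `φ(w)_{2k+1} = w_{2k} w_{2k+2}`, so a preimage of `v` is determined by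
`g k := w_{2k}`, which must satisfy `g (k+1) = v_{2k+1} g k`: take for `g` the partial products of
`k ↦ v_{2k+1}`, computed in the group `ℤˣ = {1, -1}`.
-/

open Finset

noncomputable def intPartialProd {G : Type*} [CommGroup G] (u : ℤ → G) (k : ℤ) : G :=
  (∏ i ∈ Ico 0 k, u i) / ∏ i ∈ Ico k 0, u i

theorem intPartialProd_add_one {G : Type*} [CommGroup G] (u : ℤ → G) (k : ℤ) :
    intPartialProd u (k + 1) = u k * intPartialProd u k := by
  unfold intPartialProd
  rcases le_or_gt 0 k with hk | hk
  · rw [← insert_Ico_right_eq_Ico_add_one hk, prod_insert (by simp),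
      Ico_eq_empty_of_le (by omega : 0 ≤ k + 1), Ico_eq_empty_of_le hk, mul_div_assoc]
  · rw [← insert_Ico_add_one_left_eq_Ico hk, prod_insert (by simp),
      Ico_eq_empty_of_le (by omega : k + 1 ≤ 0), Ico_eq_empty_of_le hk.le]
    simp

def dimerLift {α : Type*} [Neg α] (g : ℤ → α) (n : ℤ) : α :=
  if Even n then g (n / 2) else -g (n / 2)

section DimerLift

variable {α : Type*} [Neg α] (g : ℤ → α) (k : ℤ)

@[simp] theorem dimerLift_two_mul : dimerLift g (2 * k) = g k := by
  simp [dimerLift]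

@[simp] theorem dimerLift_two_mul_add_one : dimerLift g (2 * k + 1) = -g k := by
  have hdiv : (2 * k + 1) / 2 = k := by omega
  simp [dimerLift, hdiv]

end DimerLift

theorem exists_intUnit_cast_eq {x : ℝ} (hx : x = 1 ∨ x = -1) : ∃ s : ℤˣ, ((s : ℤ) : ℝ) = x := by
  rcases hx with rfl | rfl
  exacts [⟨1, by simp⟩, ⟨-1, by simp⟩]

theorem intUnit_cast_eq_one_or (s : ℤˣ) : ((s : ℤ) : ℝ) = 1 ∨ ((s : ℤ) : ℝ) = -1 := by
  rcases Int.units_eq_one_or s with rfl | rfl <;> simp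

/-- The image of the set of even-placement dimeric sequences under
`φ(w) n = - w n · w (n+1)` equals the set of ±1-sequences `v` with `v (2k) = 1` for
all `k`. -/
theorem factor_image_characterisation :
    {v : ℤ → ℝ | ∃ w : ℤ → ℝ,
        (∀ n : ℤ, w n = 1 ∨ w n = -1) ∧
        (∀ k : ℤ, w (2*k+1) = - w (2*k)) ∧
        v = fun n => - (w n * w (n+1))}
      = {v : ℤ → ℝ | (∀ n : ℤ, v n = 1 ∨ v n = -1) ∧ ∀ k : ℤ, v (2*k) = 1} := by
  ext v
  constructor
  · rintro ⟨w, hw, hdimer, rfl⟩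
    refine ⟨fun n => ?_, fun k => ?_⟩
    · rcases hw n with h | h <;> rcases hw (n + 1) with h' | h' <;> simp [h, h']
    · rcases hw (2 * k) with h | h <;> simp [hdimer k, h]
  · rintro ⟨hv, hv_even⟩
    choose u hu using fun k => exists_intUnit_cast_eq (hv (2 * k + 1))
    set g : ℤ → ℝ := fun k => ((intPartialProd u k : ℤˣ) : ℤ)
    have hg_pm (k : ℤ) : g k = 1 ∨ g k = -1 := intUnit_cast_eq_one_or _
    have hg_sq (k : ℤ) : g k * g k = 1 := by rcases hg_pm k with h | h <;> simp [h]
    have hg_succ (k : ℤ) : g (k + 1) = v (2 * k + 1) * g k := by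
      simp [g, intPartialProd_add_one, hu]
    refine ⟨dimerLift g, fun n => ?_, fun k => by simp, funext fun n => ?_⟩
    · obtain ⟨k, rfl | rfl⟩ := Int.even_or_odd' n
      · simpa using hg_pm k
      · simpa [neg_eq_iff_eq_neg, or_comm] using hg_pm k
    · obtain ⟨k, rfl | rfl⟩ := Int.even_or_odd' n
      · simp [hv_even, hg_sq]
      · have hnext : 2 * k + 1 + 1 = 2 * (k + 1) := by ring
        simp only [hnext, dimerLift_two_mul, dimerLift_two_mul_add_one, hg_succ]
        rw [neg_mul, neg_neg, mul_left_comm, hg_sq, mul_one]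
end

section
/- Let X and Y be measurable spaces, μ a probability measure on X, T : X → X a measurable μ-preserving map, φ : X → Y measurable with pushforward measure ν = φ_*μ, and T' : Y → Y a measurable ν-preserving map with φ ∘ T = T' ∘ φ. If the linear span of the eigenvectors of the Koopman operator U_T : L²(X,μ) → L²(X,μ), U_T f = f ∘ T, is dense in L²(X,μ), then the linear span of the eigenvectors of the Koopman operator U_{T'} : L²(Y,ν) → L²(Y,ν), U_{T'} g = g ∘ T', is dense in L²(Y,ν). (If X has pure point dynamical spectrum, then so does any factor Y.) -/
/-!
Let `V g = g ∘ φ`, an isometry `L²(ν) → L²(μ)` with `U_T ∘ V = V ∘ U_{T'}`, and let `g` be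
orthogonal to every eigenvector of `U_{T'}`. An eigenvalue `c` of the isometry `U_T` has
`‖c‖ = 1`, so by von Neumann's mean ergodic theorem the projection onto the `c`-eigenspace is the
limit of the Birkhoff averages of the contraction `c⁻¹ U_T`. Since `V` carries the averages of
`c⁻¹ U_{T'}` to those of `c⁻¹ U_T`, it intertwines the two eigenspace projections; the projection
of `g` vanishes, so `V g` is orthogonal to every eigenvector of `U_T`. These span a dense
subspace, hence `V g = 0` and `g = 0`.
-/

open MeasureTheory

theorem Function.Semiconj.map_birkhoffAverage_id {R M N F : Type*} [DivisionSemiring R]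
    [AddCommMonoid M] [Module R M] [AddCommMonoid N] [Module R N]
    [FunLike F M N] [AddMonoidHomClass F M N]
    {V : F} {g : M → M} {f : N → N} (h : Function.Semiconj V g f) (n : ℕ) (x : M) :
    V (birkhoffAverage R g id n x) = birkhoffAverage R f id n (V x) := by
  rw [map_birkhoffAverage R R]
  simp only [birkhoffAverage, birkhoffSum, Function.comp_apply, id, (h.iterate_right _).eq]

theorem LinearIsometry.norm_eq_one_of_apply_eq_smul {𝕜 E : Type*} [RCLike 𝕜]
    [SeminormedAddCommGroup E] [NormedSpace 𝕜 E] (U : E →ₗᵢ[𝕜] E) {f : E} {c : 𝕜}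
    (hf : ‖f‖ ≠ 0) (hfc : U f = c • f) : ‖c‖ = 1 := by
  have h : ‖c‖ * ‖f‖ = 1 * ‖f‖ := by rw [← norm_smul, ← hfc, U.norm_map, one_mul]
  exact mul_right_cancel₀ hf h

theorem ContinuousLinearMap.mem_eqLocus_inv_smul_one_iff {𝕜 E : Type*} [RCLike 𝕜]
    [NormedAddCommGroup E] [NormedSpace 𝕜 E] (U : E →L[𝕜] E) {c : 𝕜} (hc : c ≠ 0) {x : E} :
    x ∈ (c⁻¹ • U).eqLocus (1 : E →L[𝕜] E) ↔ U x = c • x := by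
  simp [LinearMap.mem_eqLocus, inv_smul_eq_iff₀ hc]

section HilbertSpace

variable {𝕜 H₁ H₂ : Type*} [RCLike 𝕜]
  [NormedAddCommGroup H₁] [InnerProductSpace 𝕜 H₁] [CompleteSpace H₁]
  [NormedAddCommGroup H₂] [InnerProductSpace 𝕜 H₂] [CompleteSpace H₂]

theorem ContinuousLinearMap.orthogonalProjectionOnto_eqLocus_one_of_semiconj
    {U₁ : H₁ →L[𝕜] H₁} {U₂ : H₂ →L[𝕜] H₂} (hU₁ : ‖U₁‖ ≤ 1) (hU₂ : ‖U₂‖ ≤ 1)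
    {V : H₂ →L[𝕜] H₁} (hV : Function.Semiconj V U₂ U₁) (x : H₂) :
    ((U₁.eqLocus (1 : H₁ →L[𝕜] H₁)).orthogonalProjectionOnto (V x) : H₁) =
      V ((U₂.eqLocus (1 : H₂ →L[𝕜] H₂)).orthogonalProjectionOnto x) := by
  refine tendsto_nhds_unique (U₁.tendsto_birkhoffAverage_orthogonalProjection hU₁ (V x)) ?_
  simp only [← hV.map_birkhoffAverage_id]
  exact (V.continuous.tendsto _).comp (U₂.tendsto_birkhoffAverage_orthogonalProjection hU₂ x)

theorem dense_span_eigenvectors_of_semiconj (U₁ : H₁ →ₗᵢ[𝕜] H₁) {U₂ : H₂ →L[𝕜] H₂}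
    (hU₂ : ‖U₂‖ ≤ 1) {V : H₂ →L[𝕜] H₁} (hV : Function.Injective V)
    (hVU : Function.Semiconj V U₂ U₁)
    (hdense : Dense (Submodule.span 𝕜 {f : H₁ | f ≠ 0 ∧ ∃ c : 𝕜, U₁ f = c • f} : Set H₁)) :
    Dense (Submodule.span 𝕜 {g : H₂ | g ≠ 0 ∧ ∃ c : 𝕜, U₂ g = c • g} : Set H₂) := by
  rw [Submodule.dense_iff_topologicalClosure_eq_top, Submodule.topologicalClosure_eq_top_iff,
    Submodule.eq_bot_iff]
  intro g hg
  suffices h : {f : H₁ | f ≠ 0 ∧ ∃ c : 𝕜, U₁ f = c • f} ⊆ (𝕜 ∙ V g)ᗮ by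
    refine hV ((map_zero V).symm ▸ hdense.eq_zero_of_inner_left 𝕜 fun v hv => ?_)
    exact Submodule.mem_orthogonal_singleton_iff_inner_right.1 (Submodule.span_le.2 h hv)
  rintro f ⟨hf, c, hfc⟩
  have hc : ‖c‖ = 1 := U₁.norm_eq_one_of_apply_eq_smul (norm_ne_zero_iff.2 hf) hfc
  have hc₀ : c ≠ 0 := norm_ne_zero_iff.1 (by rw [hc]; exact one_ne_zero)
  set S₁ := c⁻¹ • U₁.toContinuousLinearMap
  set S₂ := c⁻¹ • U₂
  have hS₁ : ‖S₁‖ ≤ 1 := by simpa [S₁, norm_smul, hc] using U₁.norm_toContinuousLinearMap_le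
  have hS₂ : ‖S₂‖ ≤ 1 := by simpa [S₂, norm_smul, hc] using hU₂
  have hVS : Function.Semiconj V S₂ S₁ := fun x => by simp [S₁, S₂, hVU.eq x]
  have hg₂ : g ∈ (S₂.eqLocus (1 : H₂ →L[𝕜] H₂))ᗮ := by
    refine Submodule.orthogonal_le (fun x hx => ?_) hg
    rcases eq_or_ne x 0 with rfl | hx₀
    · exact zero_mem _
    · exact Submodule.subset_span ⟨hx₀, c, (U₂.mem_eqLocus_inv_smul_one_iff hc₀).1 hx⟩
  have hg₁ : V g ∈ (S₁.eqLocus (1 : H₁ →L[𝕜] H₁))ᗮ := by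
    rw [← Submodule.orthogonalProjectionOnto_eq_zero_iff, ← Submodule.coe_eq_zero,
      ContinuousLinearMap.orthogonalProjectionOnto_eqLocus_one_of_semiconj hS₁ hS₂ hVS,
      Submodule.orthogonalProjectionOnto_eq_zero_iff.2 hg₂, Submodule.coe_zero, map_zero]
  exact Submodule.mem_orthogonal_singleton_iff_inner_left.2
    (hg₁ f ((ContinuousLinearMap.mem_eqLocus_inv_smul_one_iff _ hc₀).2 hfc))

end HilbertSpace

namespace MeasureTheory.Lp

variable {α β E : Type*} [MeasurableSpace α] [MeasurableSpace β] {μ : Measure α} {ν : Measure β}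
  [NormedAddCommGroup E] {p : ENNReal}

theorem compMeasurePreserving_eq_smul_iff {𝕜 : Type*} [NormedRing 𝕜] [Module 𝕜 E]
    [IsBoundedSMul 𝕜 E] {T : α → α} (hT : MeasurePreserving T μ μ) (f : Lp E p μ) (c : 𝕜) :
    compMeasurePreserving T hT f = c • f ↔ (fun x => f (T x)) =ᵐ[μ] fun x => c • f x := by
  rw [Lp.ext_iff, (coeFn_compMeasurePreserving f hT).congr_left, (coeFn_smul c f).congr_right]
  rfl

theorem setOf_ne_zero_and_comp_ae_eq_mul {𝕜 : Type*} [NormedRing 𝕜] [Fact (1 ≤ p)]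
    {T : α → α} (hT : MeasurePreserving T μ μ) :
    {f : Lp 𝕜 p μ | f ≠ 0 ∧ ∃ c : 𝕜, (fun x => f (T x)) =ᵐ[μ] fun x => c * f x} =
      {f | f ≠ 0 ∧ ∃ c : 𝕜, compMeasurePreservingₗᵢ 𝕜 T hT f = c • f} :=
  Set.ext fun f => and_congr_right' <| exists_congr fun c =>
    (compMeasurePreserving_eq_smul_iff hT f c).symm

theorem semiconj_compMeasurePreserving {T : α → α} {T' : β → β} {φ : α → β}
    (hT : MeasurePreserving T μ μ) (hT' : MeasurePreserving T' ν ν)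
    (hφ : MeasurePreserving φ μ ν) (h : φ ∘ T = T' ∘ φ) :
    Function.Semiconj (compMeasurePreserving φ hφ : Lp E p ν → Lp E p μ)
      (compMeasurePreserving T' hT') (compMeasurePreserving T hT) := fun g => by
  rw [← compMeasurePreserving_comp_apply, ← compMeasurePreserving_comp_apply]
  congr 2
  exact h.symm

end MeasureTheory.Lp

theorem factor_pure_point_spectrum_general
    {X Y : Type*} [MeasurableSpace X] [MeasurableSpace Y]
    (μ : Measure X)
    (T : X → X) (hT : MeasurePreserving T μ μ)
    (φ : X → Y) (hφ : Measurable φ)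
    (ν : Measure Y) (hν : ν = μ.map φ)
    (T' : Y → Y) (hT' : MeasurePreserving T' ν ν)
    (hcomm : φ ∘ T = T' ∘ φ)
    (hdense : Dense (↑(Submodule.span ℂ
        {f : Lp ℂ 2 μ | f ≠ 0 ∧ ∃ c : ℂ,
          (fun x => (f : X → ℂ) (T x)) =ᵐ[μ] fun x => c * (f : X → ℂ) x})
      : Set (Lp ℂ 2 μ))) :
    Dense (↑(Submodule.span ℂ
        {g : Lp ℂ 2 ν | g ≠ 0 ∧ ∃ c : ℂ,
          (fun y => (g : Y → ℂ) (T' y)) =ᵐ[ν] fun y => c * (g : Y → ℂ) y})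
      : Set (Lp ℂ 2 ν)) := by
  have hφ' : MeasurePreserving φ μ ν := ⟨hφ, hν.symm⟩
  let U : Lp ℂ 2 μ →ₗᵢ[ℂ] Lp ℂ 2 μ := Lp.compMeasurePreservingₗᵢ ℂ T hT
  let U' : Lp ℂ 2 ν →ₗᵢ[ℂ] Lp ℂ 2 ν := Lp.compMeasurePreservingₗᵢ ℂ T' hT'
  let V : Lp ℂ 2 ν →ₗᵢ[ℂ] Lp ℂ 2 μ := Lp.compMeasurePreservingₗᵢ ℂ φ hφ'
  have hV : Function.Semiconj V.toContinuousLinearMap U'.toContinuousLinearMap U :=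
    Lp.semiconj_compMeasurePreserving hT hT' hφ' hcomm
  rw [Lp.setOf_ne_zero_and_comp_ae_eq_mul hT] at hdense
  rw [Lp.setOf_ne_zero_and_comp_ae_eq_mul hT']
  simpa only [LinearIsometry.coe_toContinuousLinearMap] using
    dense_span_eigenvectors_of_semiconj U U'.norm_toContinuousLinearMap_le V.injective hV hdense

/-- If the span of the Koopman eigenvectors of `(X, μ, T)` is dense in
`L²(X, μ)` (pure point dynamical spectrum), and `(Y, ν, T')` is a factor via `φ`
(with `ν = φ_*μ`, `φ ∘ T = T' ∘ φ`), then the span of the Koopman eigenvectors of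
`(Y, ν, T')` is dense in `L²(Y, ν)`.  An eigenvector is a nonzero `f ∈ L²` with
`f ∘ T = c·f` almost everywhere, for some `c : ℂ`. -/
theorem factor_pure_point_spectrum
    {X Y : Type*} [MeasurableSpace X] [MeasurableSpace Y]
    (μ : Measure X) [IsProbabilityMeasure μ]
    (T : X → X) (hTmeas : Measurable T) (hT : MeasurePreserving T μ μ)
    (φ : X → Y) (hφ : Measurable φ)
    (ν : Measure Y) (hν : ν = μ.map φ)
    (T' : Y → Y) (hT'meas : Measurable T') (hT' : MeasurePreserving T' ν ν)
    (hcomm : φ ∘ T = T' ∘ φ)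
    (hdense : Dense (↑(Submodule.span ℂ
        {f : Lp ℂ 2 μ | f ≠ 0 ∧ ∃ c : ℂ,
          (fun x => (f : X → ℂ) (T x)) =ᵐ[μ] fun x => c * (f : X → ℂ) x})
      : Set (Lp ℂ 2 μ))) :
    Dense (↑(Submodule.span ℂ
        {g : Lp ℂ 2 ν | g ≠ 0 ∧ ∃ c : ℂ,
          (fun y => (g : Y → ℂ) (T' y)) =ᵐ[ν] fun y => c * (g : Y → ℂ) y})
      : Set (Lp ℂ 2 ν)) :=
  factor_pure_point_spectrum_general μ T hT φ hφ ν hν T' hT' hcomm hdense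
end
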